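/- arXiv:2402.16756 — 10 statements merged into one kernel-verified Lean document; each statement's English description precedes it below -/
import Mathlib

section
/- Let a, b, c, d, σ ∈ ℝ, let λ > 0 and m ∈ (0,1], and let C, S, D : ℝ → ℝ be differentiable functions satisfying the Jacobi cnoidal identities. Suppose the real numbers j0, j1, j2, k0, k1, k2 satisfy the coefficient system (coeffs 1). Then the functions η(ξ) = j0 + j1·C(ξ) + j2·C(ξ)² and w(ξ) = k0 + k1·C(ξ) + k2·C(ξ)² satisfy, for all ξ ∈ ℝ, the traveling-wave ODE system of the abcd-system: −σ·η′(ξ) + w′(ξ) + (η·w)′(ξ) + a·w‴(ξ) + b·σ·η‴(ξ) = 0 and −σ·w′(ξ) + η′(ξ) + w(ξ)·w′(ξ) + c·η‴(ξ) + d·σ·w‴(ξ) = 0. -/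
/-!
Along a cnoidal triple the derivatives of polynomials in `C` close up: `(p ∘ C)' = -λ p'(C) S D`,
and, since `S²` and `D²` are polynomials in `C`, `(q(C) S D)'` is again a polynomial in `C`.
Hence every term of both traveling-wave equations is `S D` times a cubic polynomial in `C`, whose
four coefficients are `-λ` times the left-hand sides of the coefficient system.
-/

open Polynomial

structure IsJacobiCnoidal (lam m : ℝ) (C S D : ℝ → ℝ) : Prop where
  sn_sq : ∀ x, S x ^ 2 = 1 - C x ^ 2
  dn_sq : ∀ x, D x ^ 2 = 1 - m ^ 2 + m ^ 2 * C x ^ 2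
  hasDerivAt_cn : ∀ x, HasDerivAt C (-lam * S x * D x) x
  hasDerivAt_sn : ∀ x, HasDerivAt S (lam * C x * D x) x
  hasDerivAt_dn : ∀ x, HasDerivAt D (-m ^ 2 * lam * C x * S x) x

/-- Built from `(S D)' = λ C (1 - 2m² + 2m² C²)` and `S² D² = (1 - C²)(1 - m² + m² C²)`. -/
noncomputable def snDnDeriv (m : ℝ) (q : ℝ[X]) : ℝ[X] :=
  -derivative q * (1 - X ^ 2) * (Polynomial.C (1 - m ^ 2) + Polynomial.C (m ^ 2) * X ^ 2)
    + q * X * (Polynomial.C (1 - 2 * m ^ 2) + Polynomial.C (2 * m ^ 2) * X ^ 2)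

namespace IsJacobiCnoidal

variable {lam m : ℝ} {C S D : ℝ → ℝ}

theorem of_deriv (hC : Differentiable ℝ C) (hS : Differentiable ℝ S) (hD : Differentiable ℝ D)
    (hSid : ∀ ξ : ℝ, S ξ ^ 2 = 1 - C ξ ^ 2)
    (hDid : ∀ ξ : ℝ, D ξ ^ 2 = 1 - m ^ 2 + m ^ 2 * C ξ ^ 2)
    (hC' : ∀ ξ : ℝ, deriv C ξ = -lam * S ξ * D ξ)
    (hS' : ∀ ξ : ℝ, deriv S ξ = lam * C ξ * D ξ)
    (hD' : ∀ ξ : ℝ, deriv D ξ = -m ^ 2 * lam * C ξ * S ξ) :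
    IsJacobiCnoidal lam m C S D where
  sn_sq := hSid
  dn_sq := hDid
  hasDerivAt_cn x := hC' x ▸ (hC x).hasDerivAt
  hasDerivAt_sn x := hS' x ▸ (hS x).hasDerivAt
  hasDerivAt_dn x := hD' x ▸ (hD x).hasDerivAt

theorem hasDerivAt_eval_cn (h : IsJacobiCnoidal lam m C S D) (p : ℝ[X]) (x : ℝ) :
    HasDerivAt (fun y => p.eval (C y)) (-lam * (derivative p).eval (C x) * (S x * D x)) x :=
  ((p.hasDerivAt (C x)).comp x (h.hasDerivAt_cn x)).congr_deriv (by ring)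

theorem hasDerivAt_eval_cn_mul_sn_mul_dn (h : IsJacobiCnoidal lam m C S D) (q : ℝ[X]) (x : ℝ) :
    HasDerivAt (fun y => q.eval (C y) * (S y * D y)) (lam * (snDnDeriv m q).eval (C x)) x := by
  refine ((h.hasDerivAt_eval_cn q x).mul
    ((h.hasDerivAt_sn x).mul (h.hasDerivAt_dn x))).congr_deriv ?_
  simp only [snDnDeriv, eval_add, eval_mul, eval_neg, eval_sub, eval_pow, eval_X, eval_C, eval_one,
    Pi.mul_apply]
  linear_combination (-lam * (derivative q).eval (C x) * D x ^ 2
      - m ^ 2 * lam * q.eval (C x) * C x) * h.sn_sq x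
    + (-lam * (derivative q).eval (C x) * (1 - C x ^ 2) + lam * q.eval (C x) * C x) * h.dn_sq x

theorem deriv_eval_cn (h : IsJacobiCnoidal lam m C S D) (p : ℝ[X]) :
    deriv (fun y => p.eval (C y)) = fun x => -lam * (derivative p).eval (C x) * (S x * D x) :=
  funext fun x => (h.hasDerivAt_eval_cn p x).deriv

theorem deriv_deriv_eval_cn (h : IsJacobiCnoidal lam m C S D) (p : ℝ[X]) :
    deriv (deriv (fun y => p.eval (C y))) = fun x =>
      -lam ^ 2 * (snDnDeriv m (derivative p)).eval (C x) := by
  have hfactor : (fun x => -lam * (derivative p).eval (C x) * (S x * D x))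
      = fun x => -lam * ((derivative p).eval (C x) * (S x * D x)) :=
    funext fun x => by ring
  funext x
  rw [h.deriv_eval_cn, hfactor]
  exact (((h.hasDerivAt_eval_cn_mul_sn_mul_dn (derivative p) x).const_mul (-lam)).congr_deriv
    (by ring)).deriv

theorem deriv_deriv_deriv_eval_cn (h : IsJacobiCnoidal lam m C S D) (p : ℝ[X]) :
    deriv (deriv (deriv (fun y => p.eval (C y)))) = fun x =>
      lam ^ 3 * (derivative (snDnDeriv m (derivative p))).eval (C x) * (S x * D x) := by
  funext x
  rw [h.deriv_deriv_eval_cn]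
  exact (((h.hasDerivAt_eval_cn (snDnDeriv m (derivative p)) x).const_mul (-lam ^ 2)).congr_deriv
    (by ring)).deriv

end IsJacobiCnoidal

theorem abcd_cnoidal_quadratic_solution_general
    (a b c d σ lam m : ℝ)
    (C S D : ℝ → ℝ)
    (hC : Differentiable ℝ C) (hS : Differentiable ℝ S) (hD : Differentiable ℝ D)
    (hSid : ∀ ξ : ℝ, S ξ ^ 2 = 1 - C ξ ^ 2)
    (hDid : ∀ ξ : ℝ, D ξ ^ 2 = 1 - m ^ 2 + m ^ 2 * C ξ ^ 2)
    (hC' : ∀ ξ : ℝ, deriv C ξ = -lam * S ξ * D ξ)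
    (hS' : ∀ ξ : ℝ, deriv S ξ = lam * C ξ * D ξ)
    (hD' : ∀ ξ : ℝ, deriv D ξ = -m ^ 2 * lam * C ξ * S ξ)
    (j0 j1 j2 k0 k1 k2 : ℝ)
    (h13 : -24*b*lam^2*m^2*σ*j2 - 24*a*lam^2*m^2*k2 + 4*j2*k2 = 0)
    (h12 : -6*b*lam^2*m^2*σ*j1 - 6*a*lam^2*m^2*k1 + 3*j1*k2 + 3*j2*k1 = 0)
    (h11 : 16*b*lam^2*m^2*σ*j2 + 16*a*lam^2*m^2*k2 - 8*b*lam^2*σ*j2 - 8*a*lam^2*k2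
        - 2*σ*j2 + 2*j0*k2 + 2*j1*k1 + 2*j2*k0 + 2*k2 = 0)
    (h10 : 2*b*lam^2*m^2*σ*j1 + 2*a*lam^2*m^2*k1 - b*lam^2*σ*j1 - a*lam^2*k1
        - σ*j1 + j0*k1 + j1*k0 + k1 = 0)
    (h23 : -24*d*lam^2*m^2*σ*k2 - 24*c*lam^2*m^2*j2 + 2*k2^2 = 0)
    (h22 : -6*d*lam^2*m^2*σ*k1 - 6*c*lam^2*m^2*j1 + 3*k1*k2 = 0)
    (h21 : 16*d*lam^2*m^2*σ*k2 + 16*c*lam^2*m^2*j2 - 8*d*lam^2*σ*k2 - 8*c*lam^2*j2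
        - 2*σ*k2 + 2*k0*k2 + k1^2 + 2*j2 = 0)
    (h20 : 2*d*lam^2*m^2*σ*k1 + 2*c*lam^2*m^2*j1 - d*lam^2*σ*k1 - c*lam^2*j1
        - σ*k1 + k0*k1 + j1 = 0)
    (η w : ℝ → ℝ)
    (hη : ∀ x : ℝ, η x = j0 + j1 * C x + j2 * C x ^ 2)
    (hw : ∀ x : ℝ, w x = k0 + k1 * C x + k2 * C x ^ 2) :
    ∀ ξ : ℝ,
      (-σ * deriv η ξ + deriv w ξ + deriv (fun x => η x * w x) ξ
        + a * deriv (deriv (deriv w)) ξ + b * σ * deriv (deriv (deriv η)) ξ = 0) ∧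
      (-σ * deriv w ξ + deriv η ξ + w ξ * deriv w ξ
        + c * deriv (deriv (deriv η)) ξ + d * σ * deriv (deriv (deriv w)) ξ = 0) := by
  have hcn := IsJacobiCnoidal.of_deriv hC hS hD hSid hDid hC' hS' hD'
  set p : ℝ[X] := Polynomial.C j0 + Polynomial.C j1 * X + Polynomial.C j2 * X ^ 2
  set q : ℝ[X] := Polynomial.C k0 + Polynomial.C k1 * X + Polynomial.C k2 * X ^ 2
  obtain rfl : η = fun x => p.eval (C x) := funext fun x => by simp [hη, p]
  obtain rfl : w = fun x => q.eval (C x) := funext fun x => by simp [hw, q]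
  have hηw : (fun x => p.eval (C x) * q.eval (C x)) = fun x => (p * q).eval (C x) := by
    simp only [eval_mul]
  intro ξ
  rw [hcn.deriv_deriv_deriv_eval_cn, hcn.deriv_deriv_deriv_eval_cn, hηw]
  simp only [hcn.deriv_eval_cn]
  simp only [p, q, snDnDeriv, derivative_add, derivative_mul, derivative_C, derivative_X,
    derivative_X_sq, derivative_sub, derivative_neg, derivative_one, derivative_zero, eval_add,
    eval_mul, eval_neg, eval_sub, eval_pow, eval_X, eval_C, eval_one, eval_zero]
  constructor
  · linear_combination (-(lam * S ξ * D ξ * C ξ ^ 3)) * h13 + (-(lam * S ξ * D ξ * C ξ ^ 2)) * h12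
      + (-(lam * S ξ * D ξ * C ξ)) * h11 + (-(lam * S ξ * D ξ)) * h10
  · linear_combination (-(lam * S ξ * D ξ * C ξ ^ 3)) * h23 + (-(lam * S ξ * D ξ * C ξ ^ 2)) * h22
      + (-(lam * S ξ * D ξ * C ξ)) * h21 + (-(lam * S ξ * D ξ)) * h20

/-- If the coefficients `j0,j1,j2,k0,k1,k2` satisfy the coefficient system
(coeffs 1), then the quadratic cnoidal ansatz solves the traveling-wave ODE system of
the abcd-system. -/
theorem abcd_cnoidal_quadratic_solution
    (a b c d σ lam m : ℝ) (hlam : 0 < lam) (hm : m ∈ Set.Ioc (0 : ℝ) 1)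
    (C S D : ℝ → ℝ)
    (hC : Differentiable ℝ C) (hS : Differentiable ℝ S) (hD : Differentiable ℝ D)
    (hSid : ∀ ξ : ℝ, S ξ ^ 2 = 1 - C ξ ^ 2)
    (hDid : ∀ ξ : ℝ, D ξ ^ 2 = 1 - m ^ 2 + m ^ 2 * C ξ ^ 2)
    (hC' : ∀ ξ : ℝ, deriv C ξ = -lam * S ξ * D ξ)
    (hS' : ∀ ξ : ℝ, deriv S ξ = lam * C ξ * D ξ)
    (hD' : ∀ ξ : ℝ, deriv D ξ = -m ^ 2 * lam * C ξ * S ξ)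
    (j0 j1 j2 k0 k1 k2 : ℝ)
    (h13 : -24*b*lam^2*m^2*σ*j2 - 24*a*lam^2*m^2*k2 + 4*j2*k2 = 0)
    (h12 : -6*b*lam^2*m^2*σ*j1 - 6*a*lam^2*m^2*k1 + 3*j1*k2 + 3*j2*k1 = 0)
    (h11 : 16*b*lam^2*m^2*σ*j2 + 16*a*lam^2*m^2*k2 - 8*b*lam^2*σ*j2 - 8*a*lam^2*k2
        - 2*σ*j2 + 2*j0*k2 + 2*j1*k1 + 2*j2*k0 + 2*k2 = 0)
    (h10 : 2*b*lam^2*m^2*σ*j1 + 2*a*lam^2*m^2*k1 - b*lam^2*σ*j1 - a*lam^2*k1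
        - σ*j1 + j0*k1 + j1*k0 + k1 = 0)
    (h23 : -24*d*lam^2*m^2*σ*k2 - 24*c*lam^2*m^2*j2 + 2*k2^2 = 0)
    (h22 : -6*d*lam^2*m^2*σ*k1 - 6*c*lam^2*m^2*j1 + 3*k1*k2 = 0)
    (h21 : 16*d*lam^2*m^2*σ*k2 + 16*c*lam^2*m^2*j2 - 8*d*lam^2*σ*k2 - 8*c*lam^2*j2
        - 2*σ*k2 + 2*k0*k2 + k1^2 + 2*j2 = 0)
    (h20 : 2*d*lam^2*m^2*σ*k1 + 2*c*lam^2*m^2*j1 - d*lam^2*σ*k1 - c*lam^2*j1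
        - σ*k1 + k0*k1 + j1 = 0)
    (η w : ℝ → ℝ)
    (hη : ∀ x : ℝ, η x = j0 + j1 * C x + j2 * C x ^ 2)
    (hw : ∀ x : ℝ, w x = k0 + k1 * C x + k2 * C x ^ 2) :
    ∀ ξ : ℝ,
      (-σ * deriv η ξ + deriv w ξ + deriv (fun x => η x * w x) ξ
        + a * deriv (deriv (deriv w)) ξ + b * σ * deriv (deriv (deriv η)) ξ = 0) ∧
      (-σ * deriv w ξ + deriv η ξ + w ξ * deriv w ξ
        + c * deriv (deriv (deriv η)) ξ + d * σ * deriv (deriv (deriv w)) ξ = 0) :=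
  abcd_cnoidal_quadratic_solution_general a b c d σ lam m C S D hC hS hD hSid hDid hC' hS' hD' j0 j1
    j2 k0 k1 k2 h13 h12 h11 h10 h23 h22 h21 h20 η w hη hw
end

section
/- Let a, b, d, σ ∈ ℝ, let λ > 0 and m ∈ (0,1], and let C, S, D : ℝ → ℝ be differentiable functions satisfying the Jacobi cnoidal identities. Suppose the real numbers j0, j2, j4, k0, k2 satisfy the reduced coefficient system (coeffs 2 red). Then the functions η(ξ) = j0 + j2·C(ξ)² + j4·C(ξ)⁴ and w(ξ) = k0 + k2·C(ξ)² satisfy, for all ξ ∈ ℝ, the traveling-wave ODE system of the abcd-system with c = 0: −σ·η′(ξ) + w′(ξ) + (η·w)′(ξ) + a·w‴(ξ) + b·σ·η‴(ξ) = 0 and −σ·w′(ξ) + η′(ξ) + w(ξ)·w′(ξ) + d·σ·w‴(ξ) = 0. -/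
/-!
The cnoidal identities make two classes of functions closed under differentiation: the even
ones `p(C²)` and the odd ones `p(C²) · C S D`, for real polynomials `p`; differentiation maps
each class to the other and acts on `p` by an explicit polynomial operation. Hence every term of
the two traveling-wave equations is of the form `q(C²) · C S D`. Collecting coefficients, the
first equation is `-λ C S D ((III) + C² (II) + C⁴ (I))` and the second is
`-λ C S D ((V) + C² (IV))`.
-/

structure IsJacobiCnoidal_s1 (lam m : ℝ) (C S D : ℝ → ℝ) : Prop where
  sq_S : ∀ x, S x ^ 2 = 1 - C x ^ 2
  sq_D : ∀ x, D x ^ 2 = 1 - m ^ 2 + m ^ 2 * C x ^ 2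
  hasDerivAt_C : ∀ x, HasDerivAt C (-lam * S x * D x) x
  hasDerivAt_S : ∀ x, HasDerivAt S (lam * C x * D x) x
  hasDerivAt_D : ∀ x, HasDerivAt D (-m ^ 2 * lam * C x * S x) x

theorem IsJacobiCnoidal_s1.of_deriv {lam m : ℝ} {C S D : ℝ → ℝ}
    (hC : Differentiable ℝ C) (hS : Differentiable ℝ S) (hD : Differentiable ℝ D)
    (hSid : ∀ x, S x ^ 2 = 1 - C x ^ 2) (hDid : ∀ x, D x ^ 2 = 1 - m ^ 2 + m ^ 2 * C x ^ 2)
    (hC' : ∀ x, deriv C x = -lam * S x * D x) (hS' : ∀ x, deriv S x = lam * C x * D x)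
    (hD' : ∀ x, deriv D x = -m ^ 2 * lam * C x * S x) :
    IsJacobiCnoidal_s1 lam m C S D where
  sq_S := hSid
  sq_D := hDid
  hasDerivAt_C x := hC' x ▸ (hC x).hasDerivAt
  hasDerivAt_S x := hS' x ▸ (hS x).hasDerivAt
  hasDerivAt_D x := hD' x ▸ (hD x).hasDerivAt

/-- With `t = C²`: `(C S D)' = λ ((2t - 1)(1 - m² + m² t) - m² t (1 - t))`, and
`(t)' = -2λ · C S D` where `(C S D)² = t (1 - t)(1 - m² + m² t)`. -/
noncomputable def cnoidalOddDeriv (m : ℝ) (p : Polynomial ℝ) : Polynomial ℝ :=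
  open Polynomial in
  (-2 * X * (1 - X) * (C (1 - m ^ 2) + C (m ^ 2) * X)) * derivative p
    + ((2 * X - 1) * (C (1 - m ^ 2) + C (m ^ 2) * X) - C (m ^ 2) * X * (1 - X)) * p

namespace IsJacobiCnoidal_s1

variable {lam m : ℝ} {C S D : ℝ → ℝ} (h : IsJacobiCnoidal_s1 lam m C S D) (p : Polynomial ℝ)
include h

theorem hasDerivAt_eval_sq (x : ℝ) :
    HasDerivAt (fun x => p.eval (C x ^ 2))
      ((Polynomial.C (-2 * lam) * Polynomial.derivative p).eval (C x ^ 2)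
        * (C x * S x * D x)) x := by
  refine ((p.hasDerivAt (C x ^ 2)).comp x ((h.hasDerivAt_C x).pow 2)).congr_deriv ?_
  simp only [Polynomial.eval_mul, Polynomial.eval_C]
  push_cast
  ring

theorem hasDerivAt_eval_sq_mul (x : ℝ) :
    HasDerivAt (fun x => p.eval (C x ^ 2) * (C x * S x * D x))
      ((Polynomial.C lam * cnoidalOddDeriv m p).eval (C x ^ 2)) x := by
  refine ((h.hasDerivAt_eval_sq p x).mul
    (((h.hasDerivAt_C x).mul (h.hasDerivAt_S x)).mul (h.hasDerivAt_D x))).congr_deriv ?_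
  simp only [cnoidalOddDeriv, Pi.mul_apply, Polynomial.eval_add, Polynomial.eval_sub,
    Polynomial.eval_mul, Polynomial.eval_neg, Polynomial.eval_C,
    Polynomial.eval_X, Polynomial.eval_one, Polynomial.eval_ofNat]
  linear_combination
    -lam * (2 * C x ^ 2 * (Polynomial.derivative p).eval (C x ^ 2) * D x ^ 2
      + p.eval (C x ^ 2) * (D x ^ 2 + m ^ 2 * C x ^ 2)) * h.sq_S x
    - lam * (2 * C x ^ 2 * (1 - C x ^ 2) * (Polynomial.derivative p).eval (C x ^ 2)
      + p.eval (C x ^ 2) * (1 - 2 * C x ^ 2)) * h.sq_D x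

theorem deriv_eval_sq :
    deriv (fun x => p.eval (C x ^ 2)) = fun x =>
      (Polynomial.C (-2 * lam) * Polynomial.derivative p).eval (C x ^ 2) * (C x * S x * D x) :=
  funext fun x => (h.hasDerivAt_eval_sq p x).deriv

theorem deriv_eval_sq_mul :
    deriv (fun x => p.eval (C x ^ 2) * (C x * S x * D x)) = fun x =>
      (Polynomial.C lam * cnoidalOddDeriv m p).eval (C x ^ 2) :=
  funext fun x => (h.hasDerivAt_eval_sq_mul p x).deriv

end IsJacobiCnoidal_s1

theorem abcd_cnoidal_quartic_solution_c_eq_zero_general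
    (a b d σ lam m : ℝ)
    (C S D : ℝ → ℝ)
    (hC : Differentiable ℝ C) (hS : Differentiable ℝ S) (hD : Differentiable ℝ D)
    (hSid : ∀ ξ : ℝ, S ξ ^ 2 = 1 - C ξ ^ 2)
    (hDid : ∀ ξ : ℝ, D ξ ^ 2 = 1 - m ^ 2 + m ^ 2 * C ξ ^ 2)
    (hC' : ∀ ξ : ℝ, deriv C ξ = -lam * S ξ * D ξ)
    (hS' : ∀ ξ : ℝ, deriv S ξ = lam * C ξ * D ξ)
    (hD' : ∀ ξ : ℝ, deriv D ξ = -m ^ 2 * lam * C ξ * S ξ)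
    (j0 j2 j4 k0 k2 : ℝ)
    (hI : -6*j4*(20*b*lam^2*m^2*σ - k2) = 0)
    (hII : -24*b*lam^2*m^2*σ*j2 + 128*b*lam^2*m^2*σ*j4 - 24*a*lam^2*m^2*k2
        - 64*b*lam^2*σ*j4 - 4*σ*j4 + 4*j2*k2 + 4*j4*k0 = 0)
    (hIII : 16*b*lam^2*m^2*σ*j2 - 24*b*lam^2*m^2*σ*j4 + 16*a*lam^2*m^2*k2
        - 8*b*lam^2*σ*j2 + 24*b*lam^2*σ*j4 - 8*a*lam^2*k2 - 2*σ*j2 + 2*j0*k2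
        + 2*j2*k0 + 2*k2 = 0)
    (hIV : -24*d*lam^2*m^2*σ*k2 + 2*k2^2 + 4*j4 = 0)
    (hV : 16*d*lam^2*m^2*σ*k2 - 8*d*lam^2*σ*k2 - 2*σ*k2 + 2*k0*k2 + 2*j2 = 0)
    (η w : ℝ → ℝ)
    (hη : ∀ x : ℝ, η x = j0 + j2 * C x ^ 2 + j4 * C x ^ 4)
    (hw : ∀ x : ℝ, w x = k0 + k2 * C x ^ 2) :
    ∀ ξ : ℝ,
      (-σ * deriv η ξ + deriv w ξ + deriv (fun x => η x * w x) ξ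
        + a * deriv (deriv (deriv w)) ξ + b * σ * deriv (deriv (deriv η)) ξ = 0) ∧
      (-σ * deriv w ξ + deriv η ξ + w ξ * deriv w ξ
        + d * σ * deriv (deriv (deriv w)) ξ = 0) := by
  have hcn := IsJacobiCnoidal_s1.of_deriv hC hS hD hSid hDid hC' hS' hD'
  set pη : Polynomial ℝ :=
    Polynomial.C j0 + Polynomial.C j2 * Polynomial.X + Polynomial.C j4 * Polynomial.X ^ 2
  set pw : Polynomial ℝ := Polynomial.C k0 + Polynomial.C k2 * Polynomial.X
  have hη_eval : η = fun x => pη.eval (C x ^ 2) := funext fun x => by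
    simp only [pη, hη, Polynomial.eval_add, Polynomial.eval_mul, Polynomial.eval_pow,
      Polynomial.eval_C, Polynomial.eval_X]
    ring
  have hw_eval : w = fun x => pw.eval (C x ^ 2) := funext fun x => by
    simp only [pw, hw, Polynomial.eval_add, Polynomial.eval_mul, Polynomial.eval_C,
      Polynomial.eval_X]
  have hηw_eval : (fun x => η x * w x) = fun x => (pη * pw).eval (C x ^ 2) := by
    simp only [hη_eval, hw_eval, Polynomial.eval_mul]
  intro ξ
  rw [hηw_eval, hη_eval, hw_eval]
  simp only [hcn.deriv_eval_sq, hcn.deriv_eval_sq_mul]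
  open Polynomial in
  simp only [pη, pw, cnoidalOddDeriv, map_add, map_sub, map_neg, derivative_mul,
    derivative_C, derivative_X, derivative_X_sq, derivative_one, derivative_ofNat, eval_add,
    eval_sub, eval_mul, eval_neg, eval_pow, eval_C, eval_X, eval_one, eval_ofNat, eval_zero,
    zero_mul, mul_zero, zero_add]
  constructor
  · linear_combination (-lam*C ξ*S ξ*D ξ) * hIII + (-lam*C ξ^3*S ξ*D ξ) * hII
      + (-lam*C ξ^5*S ξ*D ξ) * hI
  · linear_combination (-lam*C ξ*S ξ*D ξ) * hV + (-lam*C ξ^3*S ξ*D ξ) * hIV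

/-- If the coefficients `j0,j2,j4,k0,k2` satisfy the reduced coefficient
system (coeffs 2 red), then the quartic cnoidal ansatz solves the traveling-wave ODE
system of the abcd-system with `c = 0`. -/
theorem abcd_cnoidal_quartic_solution_c_eq_zero
    (a b d σ lam m : ℝ) (hlam : 0 < lam) (hm : m ∈ Set.Ioc (0 : ℝ) 1)
    (C S D : ℝ → ℝ)
    (hC : Differentiable ℝ C) (hS : Differentiable ℝ S) (hD : Differentiable ℝ D)
    (hSid : ∀ ξ : ℝ, S ξ ^ 2 = 1 - C ξ ^ 2)
    (hDid : ∀ ξ : ℝ, D ξ ^ 2 = 1 - m ^ 2 + m ^ 2 * C ξ ^ 2)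
    (hC' : ∀ ξ : ℝ, deriv C ξ = -lam * S ξ * D ξ)
    (hS' : ∀ ξ : ℝ, deriv S ξ = lam * C ξ * D ξ)
    (hD' : ∀ ξ : ℝ, deriv D ξ = -m ^ 2 * lam * C ξ * S ξ)
    (j0 j2 j4 k0 k2 : ℝ)
    (hI : -6*j4*(20*b*lam^2*m^2*σ - k2) = 0)
    (hII : -24*b*lam^2*m^2*σ*j2 + 128*b*lam^2*m^2*σ*j4 - 24*a*lam^2*m^2*k2
        - 64*b*lam^2*σ*j4 - 4*σ*j4 + 4*j2*k2 + 4*j4*k0 = 0)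
    (hIII : 16*b*lam^2*m^2*σ*j2 - 24*b*lam^2*m^2*σ*j4 + 16*a*lam^2*m^2*k2
        - 8*b*lam^2*σ*j2 + 24*b*lam^2*σ*j4 - 8*a*lam^2*k2 - 2*σ*j2 + 2*j0*k2
        + 2*j2*k0 + 2*k2 = 0)
    (hIV : -24*d*lam^2*m^2*σ*k2 + 2*k2^2 + 4*j4 = 0)
    (hV : 16*d*lam^2*m^2*σ*k2 - 8*d*lam^2*σ*k2 - 2*σ*k2 + 2*k0*k2 + 2*j2 = 0)
    (η w : ℝ → ℝ)
    (hη : ∀ x : ℝ, η x = j0 + j2 * C x ^ 2 + j4 * C x ^ 4)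
    (hw : ∀ x : ℝ, w x = k0 + k2 * C x ^ 2) :
    ∀ ξ : ℝ,
      (-σ * deriv η ξ + deriv w ξ + deriv (fun x => η x * w x) ξ
        + a * deriv (deriv (deriv w)) ξ + b * σ * deriv (deriv (deriv η)) ξ = 0) ∧
      (-σ * deriv w ξ + deriv η ξ + w ξ * deriv w ξ
        + d * σ * deriv (deriv (deriv w)) ξ = 0) :=
  abcd_cnoidal_quartic_solution_c_eq_zero_general a b d σ lam m C S D hC hS hD hSid hDid hC' hS' hD'
    j0 j2 j4 k0 k2 hI hII hIII hIV hV η w hη hw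
end

section
/- (Algebraic core of Theorem 3.1(ii).) Let c, d, σ ∈ ℝ with c ≠ 0, let λ > 0 and m ∈ (0,1], and let j0, j1, j2, k0, k1, k2 ∈ ℝ satisfy the coefficient system (coeffs 1) with a = 0 and b = 0, that is: 4j2k2 = 0; 3j1k2 + 3j2k1 = 0; −2σj2 + 2j0k2 + 2j1k1 + 2j2k0 + 2k2 = 0; −σj1 + j0k1 + j1k0 + k1 = 0; −24dλ²m²σk2 − 24cλ²m²j2 + 2k2² = 0; −6dλ²m²σk1 − 6cλ²m²j1 + 3k1k2 = 0; 16dλ²m²σk2 + 16cλ²m²j2 − 8dλ²σk2 − 8cλ²j2 − 2σk2 + 2k0k2 + k1² + 2j2 = 0; 2dλ²m²σk1 + 2cλ²m²j1 − dλ²σk1 − cλ²j1 − σk1 + k0k1 + j1 = 0. Then j1 = 0 and j2 = 0; in other words, the component η(ξ) = j0 + j1·cn(λξ,m) + j2·cn²(λξ,m) is constant, so only semi-trivial periodic traveling-wave solutions of this form exist when c ≠ 0 and a = b = 0. -/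
/-- algebraic core of Theorem 3.1(ii): when `c ≠ 0` and `a = b = 0`,
the coefficient system (coeffs 1) forces `j1 = 0` and `j2 = 0`, so only semi-trivial
periodic traveling-wave solutions of the quadratic cnoidal form exist. -/
theorem abcd_semitrivial_of_a_eq_zero_b_eq_zero
    (c d σ lam m : ℝ) (hc : c ≠ 0) (hlam : 0 < lam) (hm : m ∈ Set.Ioc (0 : ℝ) 1)
    (j0 j1 j2 k0 k1 k2 : ℝ)
    (h13 : 4*j2*k2 = 0)
    (h12 : 3*j1*k2 + 3*j2*k1 = 0)
    (h11 : -2*σ*j2 + 2*j0*k2 + 2*j1*k1 + 2*j2*k0 + 2*k2 = 0)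
    (h10 : -σ*j1 + j0*k1 + j1*k0 + k1 = 0)
    (h23 : -24*d*lam^2*m^2*σ*k2 - 24*c*lam^2*m^2*j2 + 2*k2^2 = 0)
    (h22 : -6*d*lam^2*m^2*σ*k1 - 6*c*lam^2*m^2*j1 + 3*k1*k2 = 0)
    (h21 : 16*d*lam^2*m^2*σ*k2 + 16*c*lam^2*m^2*j2 - 8*d*lam^2*σ*k2 - 8*c*lam^2*j2
        - 2*σ*k2 + 2*k0*k2 + k1^2 + 2*j2 = 0)
    (h20 : 2*d*lam^2*m^2*σ*k1 + 2*c*lam^2*m^2*j1 - d*lam^2*σ*k1 - c*lam^2*j1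
        - σ*k1 + k0*k1 + j1 = 0) :
    j1 = 0 ∧ j2 = 0 := by
  have hm0 : 0 < m := hm.1
  have hcl : c * lam^2 * m^2 ≠ 0 :=
    mul_ne_zero (mul_ne_zero hc (pow_ne_zero _ hlam.ne')) (pow_ne_zero _ hm0.ne')
  have h13' : j2 * k2 = 0 := by linarith [h13]
  rcases mul_eq_zero.mp h13' with hj2 | hk2
  · -- j2 = 0, so either k2 = 0 too or k2 ≠ 0; in either case use h12
    by_cases hk2 : k2 = 0
    · subst hj2; subst hk2
      have hk1 : k1 = 0 := by
        have : k1^2 = 0 := by linarith [h21]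
        exact pow_eq_zero_iff (n := 2) (by norm_num) |>.mp this
      subst hk1
      have : c * lam^2 * m^2 * j1 = 0 := by linarith [h22]
      exact ⟨by rcases mul_eq_zero.mp this with h | h; exact absurd h hcl; exact h, rfl⟩
    · refine ⟨?_, hj2⟩
      have : 3 * j1 * k2 = 0 := by rw [hj2] at h12; linarith [h12]
      have : j1 * k2 = 0 := by linarith
      rcases mul_eq_zero.mp this with h | h
      · exact h
      · exact absurd h hk2
  · subst hk2
    have hj2 : j2 = 0 := by
      have : c * lam^2 * m^2 * j2 = 0 := by nlinarith [h23]
      rcases mul_eq_zero.mp this with h | h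
      · exact absurd h hcl
      · exact h
    subst hj2
    have hk1 : k1 = 0 := by
      have : k1^2 = 0 := by linarith [h21]
      exact pow_eq_zero_iff (n := 2) (by norm_num) |>.mp this
    subst hk1
    have : c * lam^2 * m^2 * j1 = 0 := by linarith [h22]
    exact ⟨by rcases mul_eq_zero.mp this with h | h; exact absurd h hcl; exact h, rfl⟩
end

section
/- (Algebraic core of Theorem 3.2(ii).) Let λ > 0 and m ∈ (0,1], and let σ, j0, j1, j2, j3, j4, k0, k1, k2 ∈ ℝ satisfy the coefficient system obtained from the quartic cnoidal ansatz with parameters a = 1/3 and b = c = d = 0, namely the ten equations: 6j4k2 = 0; 5j3k2 + 5j4k1 = 0; −8λ²m²k2 − 4σj4 + 4j2k2 + 4j3k1 + 4j4k0 = 0; −2λ²m²k1 − 3σj3 + 3j1k2 + 3j2k1 + 3j3k0 = 0; (16/3)λ²m²k2 − (8/3)λ²k2 − 2σj2 + 2j0k2 + 2j1k1 + 2j2k0 + 2k2 = 0; (2/3)λ²m²k1 − (1/3)λ²k1 − σj1 + j0k1 + j1k0 + k1 = 0; 2k2² + 4j4 = 0; 3k1k2 + 3j3 = 0; −2σk2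 + 2k0k2 + k1² + 2j2 = 0; −σk1 + k0k1 + j1 = 0. Then j1 = j2 = j3 = j4 = k1 = k2 = 0; in other words, both components of the ansatz are constant, so only the trivial solution exists when c = 0 and b = d = 0. -/
/-- algebraic core of Theorem 3.2(ii): when `a = 1/3` and `b = c = d = 0`,
the coefficient system arising from the quartic cnoidal ansatz forces all non-constant
coefficients to vanish, i.e. only the trivial solution exists. -/
theorem abcd_trivial_of_b_eq_zero_d_eq_zero
    (lam m : ℝ) (hlam : 0 < lam) (hm : m ∈ Set.Ioc (0 : ℝ) 1)
    (σ j0 j1 j2 j3 j4 k0 k1 k2 : ℝ)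
    (e1 : 6*j4*k2 = 0)
    (e2 : 5*j3*k2 + 5*j4*k1 = 0)
    (e3 : -8*lam^2*m^2*k2 - 4*σ*j4 + 4*j2*k2 + 4*j3*k1 + 4*j4*k0 = 0)
    (e4 : -2*lam^2*m^2*k1 - 3*σ*j3 + 3*j1*k2 + 3*j2*k1 + 3*j3*k0 = 0)
    (e5 : (16/3)*lam^2*m^2*k2 - (8/3)*lam^2*k2 - 2*σ*j2 + 2*j0*k2 + 2*j1*k1
        + 2*j2*k0 + 2*k2 = 0)
    (e6 : (2/3)*lam^2*m^2*k1 - (1/3)*lam^2*k1 - σ*j1 + j0*k1 + j1*k0 + k1 = 0)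
    (e7 : 2*k2^2 + 4*j4 = 0)
    (e8 : 3*k1*k2 + 3*j3 = 0)
    (e9 : -2*σ*k2 + 2*k0*k2 + k1^2 + 2*j2 = 0)
    (e10 : -σ*k1 + k0*k1 + j1 = 0) :
    j1 = 0 ∧ j2 = 0 ∧ j3 = 0 ∧ j4 = 0 ∧ k1 = 0 ∧ k2 = 0 := by
  obtain ⟨hm0, hm1⟩ := hm
  have hk2 : k2 = 0 := by
    have h3 : k2^3 = 0 := by linear_combination (k2/2)*e7 - (1/3)*e1
    exact pow_eq_zero_iff (n := 3) (by norm_num) |>.mp h3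
  subst hk2
  have hj4 : j4 = 0 := by linear_combination (1/4)*e7
  have hj3 : j3 = 0 := by linear_combination (1/3)*e8
  subst hj3
  have hpos : 0 < lam^2 * m^2 := by positivity
  have key : k1^2*(2*lam^2*m^2) + (3/2)*k1^4 = 0 := by
    linear_combination (-k1)*e4 + (3*k1^2/2)*e9
  have hk1sq : k1^2 = 0 := by
    have hle : k1^2 ≤ 0 := by nlinarith [sq_nonneg (k1^2)]
    exact le_antisymm hle (sq_nonneg k1)
  have hk1 : k1 = 0 := by
    exact pow_eq_zero_iff (n := 2) (by norm_num) |>.mp hk1sq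
  subst hk1
  have hj2 : j2 = 0 := by linear_combination (1/2)*e9
  have hj1 : j1 = 0 := by linear_combination e10
  exact ⟨hj1, hj2, rfl, hj4, rfl, rfl⟩
end

section
/- (Verification of solution (4.1.2).) Let a, b, c, d ∈ ℝ with c ≠ 0, let λ > 0, σ ≠ 0, m ∈ (0,1], and ε ∈ {1, −1}. Assume 8ac + σ²(b−2d)² > 0, and set R = √(8ac + σ²(b−2d)²). Assume moreover σ(b+2d) + εR ≠ 0 and 4ac + σ²(b²+4d²) + εσ(b+2d)R ≠ 0. Let j0, j2, k0, k2 be given by the formulas of solution (4.1.2), and set j1 = k1 = 0. Then λ, m, σ, j0, j1, j2, k0, k1, k2 satisfy all eight equations of the coefficient system (coeffs 1). -/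
set_option maxHeartbeats 1000000

/-!
Write `r = εR`, so that `r² = 8ac + σ²(b - 2d)²`, and `s = σ(b + 2d) + r`, `w = σ(b - 2d) + r`.
Then `s w = 2J` with `J = 4ac + bσ²(b - 2d) + bσr`, which gives `4c j2 = w k2`; together with
`k2 = 3λ²m² s` this yields the two quadratic equations (i) and (v). Equations (iii) and (vii) are
linear in `j0` and `k0`, solved by `k0 = σ - 4dλ²σ(2m² - 1) - (1 + 4cλ²(2m² - 1)) w / (4c)` and
`j0 = (σ - 4bλ²σ(2m² - 1) - k0) w / (4c) - 4aλ²(2m² - 1) - 1`; the paper's formulas are these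
expressions with rationalised denominators, the second one being `4c² · s²/2`.
Every identity holding modulo `r² = 8ac + σ²(b - 2d)²` is checked by eliminating `a`, which turns
it into an identity of rational functions in the free variable `r`.
-/

namespace Solution412

variable {a b c d lam m σ ε R j0 j2 k0 k2 w : ℝ}

theorem a_eq_of_sq_eq (hc : c ≠ 0) (hr : (ε*R)^2 = 8*a*c + σ^2*(b - 2*d)^2) :
    a = ((ε*R)^2 - σ^2*(b - 2*d)^2) / (8*c) := by
  field_simp
  linarith

theorem den_eq_half_sq (hr : (ε*R)^2 = 8*a*c + σ^2*(b - 2*d)^2) :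
    4*a*c + σ^2*(b^2 + 4*d^2) + ε*σ*(b + 2*d)*R = (σ*(b + 2*d) + ε*R)^2 / 2 := by
  linear_combination (-1/2 : ℝ) * hr

theorem four_mul_c_mul_j2_eq (hc : c ≠ 0) (hr : (ε*R)^2 = 8*a*c + σ^2*(b - 2*d)^2)
    (hj2 : j2 = (3*lam^2*m^2/(2*c)) * (4*a*c + b*σ^2*(b - 2*d) + ε*b*σ*R))
    (hk2 : k2 = 3*lam^2*m^2 * (σ*(b + 2*d) + ε*R)) :
    4*c*j2 = (σ*(b - 2*d) + ε*R) * k2 := by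
  subst hj2 hk2
  obtain rfl := a_eq_of_sq_eq hc hr
  field_simp
  ring

theorem j2_mul_k2_eq (hc : c ≠ 0) (hr : (ε*R)^2 = 8*a*c + σ^2*(b - 2*d)^2)
    (hj2 : j2 = (3*lam^2*m^2/(2*c)) * (4*a*c + b*σ^2*(b - 2*d) + ε*b*σ*R))
    (hk2 : k2 = 3*lam^2*m^2 * (σ*(b + 2*d) + ε*R)) :
    j2*k2 = 6*lam^2*m^2*(b*σ*j2 + a*k2) := by
  subst hj2 hk2
  obtain rfl := a_eq_of_sq_eq hc hr
  field_simp
  ring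

theorem k2_sq_eq (hw : 4*c*j2 = (σ*(b - 2*d) + ε*R) * k2)
    (hk2 : k2 = 3*lam^2*m^2 * (σ*(b + 2*d) + ε*R)) :
    k2^2 = 12*lam^2*m^2*(d*σ*k2 + c*j2) := by
  subst hk2
  linear_combination (-3*lam^2*m^2) * hw

theorem k0_mul_k2_eq (hc : c ≠ 0) (hw : 4*c*j2 = w*k2)
    (hk0 : k0 = σ - 4*d*lam^2*σ*(2*m^2 - 1) - (1 + 4*c*lam^2*(2*m^2 - 1)) * w / (4*c)) :
    k0*k2 = σ*k2 - j2 - 4*lam^2*(2*m^2 - 1)*(d*σ*k2 + c*j2) := by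
  subst hk0
  field_simp
  linear_combination (1 + 4*c*lam^2*(2*m^2 - 1)) * hw

theorem j0_mul_k2_eq (hc : c ≠ 0) (hw : 4*c*j2 = w*k2)
    (hj0 : j0 = (σ - 4*b*lam^2*σ*(2*m^2 - 1) - k0) * w / (4*c) - 4*a*lam^2*(2*m^2 - 1) - 1) :
    j0*k2 = σ*j2 - j2*k0 - k2 - 4*lam^2*(2*m^2 - 1)*(b*σ*j2 + a*k2) := by
  subst hj0
  field_simp
  linear_combination (k0 - σ + 4*b*lam^2*σ*(2*m^2 - 1)) * hw

theorem k0_eq_closed_form (hc : c ≠ 0) (hr : (ε*R)^2 = 8*a*c + σ^2*(b - 2*d)^2)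
    (hs : σ*(b + 2*d) + ε*R ≠ 0)
    (hk0 : k0 = (-8*b^2*c*lam^2*m^2*σ^2 - 32*c*d^2*lam^2*m^2*σ^2 - 32*a*c^2*lam^2*m^2
        + 4*b^2*c*lam^2*σ^2 + 16*c*d^2*lam^2*σ^2 + 16*a*c^2*lam^2 - b^2*σ^2
        + 2*b*c*σ^2 + 2*b*d*σ^2 + 4*c*d*σ^2 - 4*a*c
        - ε*σ*R*(8*b*c*lam^2*m^2 + 16*c*d*lam^2*m^2 - 4*b*c*lam^2 - 8*c*d*lam^2
          + b - 2*c))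
        / (2*c*(σ*(b + 2*d) + ε*R))) :
    k0 = σ - 4*d*lam^2*σ*(2*m^2 - 1)
      - (1 + 4*c*lam^2*(2*m^2 - 1)) * (σ*(b - 2*d) + ε*R) / (4*c) := by
  rw [hk0, div_eq_iff (by positivity)]
  obtain rfl := a_eq_of_sq_eq hc hr
  field_simp
  ring

theorem j0_eq_closed_form (hc : c ≠ 0) (hr : (ε*R)^2 = 8*a*c + σ^2*(b - 2*d)^2)
    (hs : σ*(b + 2*d) + ε*R ≠ 0)
    (hk0 : k0 = σ - 4*d*lam^2*σ*(2*m^2 - 1)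
      - (1 + 4*c*lam^2*(2*m^2 - 1)) * (σ*(b - 2*d) + ε*R) / (4*c))
    (hj0 : j0 = (-8*b^4*c*lam^2*m^2*σ^4 + 16*b^3*c*d*lam^2*m^2*σ^4
        - 64*a*b^2*c^2*lam^2*m^2*σ^2 - 32*a*b*c^2*d*lam^2*m^2*σ^2
        - 64*a*c^2*d^2*lam^2*m^2*σ^2 + 4*b^4*c*lam^2*σ^4 - 8*b^3*c*d*lam^2*σ^4
        - 64*a^2*c^3*lam^2*m^2 + 32*a*b^2*c^2*lam^2*σ^2 + 16*a*b*c^2*d*lam^2*σ^2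
        + 32*a*c^2*d^2*lam^2*σ^2 + b^4*σ^4 - 4*b^3*d*σ^4 + 4*b^2*d^2*σ^4
        + 32*a^2*c^3*lam^2 + 8*a*b^2*c*σ^2 - 8*a*b*c*d*σ^2 - 4*b^2*c^2*σ^2
        - 16*c^2*d^2*σ^2 + 8*a^2*c^2 - 16*a*c^3
        - ε*σ*R*(8*b^3*c*lam^2*m^2*σ^2 + 32*a*b*c^2*lam^2*m^2 + 32*a*c^2*d*lam^2*m^2
          - 4*b^3*c*lam^2*σ^2 - 16*a*b*c^2*lam^2 - 16*a*c^2*d*lam^2 - b^3*σ^2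
          + 2*b^2*d*σ^2 - 4*a*b*c + 4*b*c^2 + 8*c^2*d))
        / (4*c^2*(4*a*c + σ^2*(b^2 + 4*d^2) + ε*σ*(b + 2*d)*R))) :
    j0 = (σ - 4*b*lam^2*σ*(2*m^2 - 1) - k0) * (σ*(b - 2*d) + ε*R) / (4*c)
      - 4*a*lam^2*(2*m^2 - 1) - 1 := by
  rw [hj0, den_eq_half_sq hr, div_eq_iff (by positivity), hk0]
  obtain rfl := a_eq_of_sq_eq hc hr
  field_simp
  ring

end Solution412

theorem abcd_solution_4_1_2_verification_general
    (a b c d lam m σ ε : ℝ)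
    (hc : c ≠ 0)
    (hε : ε = 1 ∨ ε = -1)
    (hpos : 8*a*c + σ^2*(b - 2*d)^2 > 0)
    (R : ℝ) (hR : R = Real.sqrt (8*a*c + σ^2*(b - 2*d)^2))
    (hden1 : σ*(b + 2*d) + ε*R ≠ 0)
    (j0 j1 j2 k0 k1 k2 : ℝ)
    (hj1 : j1 = 0) (hk1 : k1 = 0)
    (hj2 : j2 = (3*lam^2*m^2/(2*c)) * (4*a*c + b*σ^2*(b - 2*d) + ε*b*σ*R))
    (hk2 : k2 = 3*lam^2*m^2 * (σ*(b + 2*d) + ε*R))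
    (hk0 : k0 = (-8*b^2*c*lam^2*m^2*σ^2 - 32*c*d^2*lam^2*m^2*σ^2 - 32*a*c^2*lam^2*m^2
        + 4*b^2*c*lam^2*σ^2 + 16*c*d^2*lam^2*σ^2 + 16*a*c^2*lam^2 - b^2*σ^2
        + 2*b*c*σ^2 + 2*b*d*σ^2 + 4*c*d*σ^2 - 4*a*c
        - ε*σ*R*(8*b*c*lam^2*m^2 + 16*c*d*lam^2*m^2 - 4*b*c*lam^2 - 8*c*d*lam^2
          + b - 2*c))
        / (2*c*(σ*(b + 2*d) + ε*R)))
    (hj0 : j0 = (-8*b^4*c*lam^2*m^2*σ^4 + 16*b^3*c*d*lam^2*m^2*σ^4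
        - 64*a*b^2*c^2*lam^2*m^2*σ^2 - 32*a*b*c^2*d*lam^2*m^2*σ^2
        - 64*a*c^2*d^2*lam^2*m^2*σ^2 + 4*b^4*c*lam^2*σ^4 - 8*b^3*c*d*lam^2*σ^4
        - 64*a^2*c^3*lam^2*m^2 + 32*a*b^2*c^2*lam^2*σ^2 + 16*a*b*c^2*d*lam^2*σ^2
        + 32*a*c^2*d^2*lam^2*σ^2 + b^4*σ^4 - 4*b^3*d*σ^4 + 4*b^2*d^2*σ^4
        + 32*a^2*c^3*lam^2 + 8*a*b^2*c*σ^2 - 8*a*b*c*d*σ^2 - 4*b^2*c^2*σ^2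
        - 16*c^2*d^2*σ^2 + 8*a^2*c^2 - 16*a*c^3
        - ε*σ*R*(8*b^3*c*lam^2*m^2*σ^2 + 32*a*b*c^2*lam^2*m^2 + 32*a*c^2*d*lam^2*m^2
          - 4*b^3*c*lam^2*σ^2 - 16*a*b*c^2*lam^2 - 16*a*c^2*d*lam^2 - b^3*σ^2
          + 2*b^2*d*σ^2 - 4*a*b*c + 4*b*c^2 + 8*c^2*d))
        / (4*c^2*(4*a*c + σ^2*(b^2 + 4*d^2) + ε*σ*(b + 2*d)*R))) :
    (-24*b*lam^2*m^2*σ*j2 - 24*a*lam^2*m^2*k2 + 4*j2*k2 = 0) ∧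
    (-6*b*lam^2*m^2*σ*j1 - 6*a*lam^2*m^2*k1 + 3*j1*k2 + 3*j2*k1 = 0) ∧
    (16*b*lam^2*m^2*σ*j2 + 16*a*lam^2*m^2*k2 - 8*b*lam^2*σ*j2 - 8*a*lam^2*k2
      - 2*σ*j2 + 2*j0*k2 + 2*j1*k1 + 2*j2*k0 + 2*k2 = 0) ∧
    (2*b*lam^2*m^2*σ*j1 + 2*a*lam^2*m^2*k1 - b*lam^2*σ*j1 - a*lam^2*k1
      - σ*j1 + j0*k1 + j1*k0 + k1 = 0) ∧
    (-24*d*lam^2*m^2*σ*k2 - 24*c*lam^2*m^2*j2 + 2*k2^2 = 0) ∧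
    (-6*d*lam^2*m^2*σ*k1 - 6*c*lam^2*m^2*j1 + 3*k1*k2 = 0) ∧
    (16*d*lam^2*m^2*σ*k2 + 16*c*lam^2*m^2*j2 - 8*d*lam^2*σ*k2 - 8*c*lam^2*j2
      - 2*σ*k2 + 2*k0*k2 + k1^2 + 2*j2 = 0) ∧
    (2*d*lam^2*m^2*σ*k1 + 2*c*lam^2*m^2*j1 - d*lam^2*σ*k1 - c*lam^2*j1
      - σ*k1 + k0*k1 + j1 = 0) := by
  open Solution412 in
  have hr : (ε*R)^2 = 8*a*c + σ^2*(b - 2*d)^2 := by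
    rcases hε with rfl | rfl <;> simp [hR, Real.sq_sqrt hpos.le]
  have hw := four_mul_c_mul_j2_eq hc hr hj2 hk2
  have hk0' := k0_eq_closed_form hc hr hden1 hk0
  have hi := j2_mul_k2_eq hc hr hj2 hk2
  have hiii := j0_mul_k2_eq hc hw (j0_eq_closed_form hc hr hden1 hk0' hj0)
  have hv := k2_sq_eq hw hk2
  have hvii := k0_mul_k2_eq hc hw hk0'
  subst hj1 hk1
  refine ⟨by linear_combination 4*hi, by ring, by linear_combination 2*hiii, by ring,
    by linear_combination 2*hv, by ring, by linear_combination 2*hvii, by ring⟩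

/-- verification that the explicit parameters of solution (4.1.2)
(with `j1 = k1 = 0`) satisfy all eight equations of the coefficient system (coeffs 1). -/
theorem abcd_solution_4_1_2_verification
    (a b c d lam m σ ε : ℝ)
    (hc : c ≠ 0) (hlam : 0 < lam) (hσ : σ ≠ 0) (hm : m ∈ Set.Ioc (0 : ℝ) 1)
    (hε : ε = 1 ∨ ε = -1)
    (hpos : 8*a*c + σ^2*(b - 2*d)^2 > 0)
    (R : ℝ) (hR : R = Real.sqrt (8*a*c + σ^2*(b - 2*d)^2))
    (hden1 : σ*(b + 2*d) + ε*R ≠ 0)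
    (hden2 : 4*a*c + σ^2*(b^2 + 4*d^2) + ε*σ*(b + 2*d)*R ≠ 0)
    (j0 j1 j2 k0 k1 k2 : ℝ)
    (hj1 : j1 = 0) (hk1 : k1 = 0)
    (hj2 : j2 = (3*lam^2*m^2/(2*c)) * (4*a*c + b*σ^2*(b - 2*d) + ε*b*σ*R))
    (hk2 : k2 = 3*lam^2*m^2 * (σ*(b + 2*d) + ε*R))
    (hk0 : k0 = (-8*b^2*c*lam^2*m^2*σ^2 - 32*c*d^2*lam^2*m^2*σ^2 - 32*a*c^2*lam^2*m^2
        + 4*b^2*c*lam^2*σ^2 + 16*c*d^2*lam^2*σ^2 + 16*a*c^2*lam^2 - b^2*σ^2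
        + 2*b*c*σ^2 + 2*b*d*σ^2 + 4*c*d*σ^2 - 4*a*c
        - ε*σ*R*(8*b*c*lam^2*m^2 + 16*c*d*lam^2*m^2 - 4*b*c*lam^2 - 8*c*d*lam^2
          + b - 2*c))
        / (2*c*(σ*(b + 2*d) + ε*R)))
    (hj0 : j0 = (-8*b^4*c*lam^2*m^2*σ^4 + 16*b^3*c*d*lam^2*m^2*σ^4
        - 64*a*b^2*c^2*lam^2*m^2*σ^2 - 32*a*b*c^2*d*lam^2*m^2*σ^2
        - 64*a*c^2*d^2*lam^2*m^2*σ^2 + 4*b^4*c*lam^2*σ^4 - 8*b^3*c*d*lam^2*σ^4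
        - 64*a^2*c^3*lam^2*m^2 + 32*a*b^2*c^2*lam^2*σ^2 + 16*a*b*c^2*d*lam^2*σ^2
        + 32*a*c^2*d^2*lam^2*σ^2 + b^4*σ^4 - 4*b^3*d*σ^4 + 4*b^2*d^2*σ^4
        + 32*a^2*c^3*lam^2 + 8*a*b^2*c*σ^2 - 8*a*b*c*d*σ^2 - 4*b^2*c^2*σ^2
        - 16*c^2*d^2*σ^2 + 8*a^2*c^2 - 16*a*c^3
        - ε*σ*R*(8*b^3*c*lam^2*m^2*σ^2 + 32*a*b*c^2*lam^2*m^2 + 32*a*c^2*d*lam^2*m^2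
          - 4*b^3*c*lam^2*σ^2 - 16*a*b*c^2*lam^2 - 16*a*c^2*d*lam^2 - b^3*σ^2
          + 2*b^2*d*σ^2 - 4*a*b*c + 4*b*c^2 + 8*c^2*d))
        / (4*c^2*(4*a*c + σ^2*(b^2 + 4*d^2) + ε*σ*(b + 2*d)*R))) :
    (-24*b*lam^2*m^2*σ*j2 - 24*a*lam^2*m^2*k2 + 4*j2*k2 = 0) ∧
    (-6*b*lam^2*m^2*σ*j1 - 6*a*lam^2*m^2*k1 + 3*j1*k2 + 3*j2*k1 = 0) ∧
    (16*b*lam^2*m^2*σ*j2 + 16*a*lam^2*m^2*k2 - 8*b*lam^2*σ*j2 - 8*a*lam^2*k2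
      - 2*σ*j2 + 2*j0*k2 + 2*j1*k1 + 2*j2*k0 + 2*k2 = 0) ∧
    (2*b*lam^2*m^2*σ*j1 + 2*a*lam^2*m^2*k1 - b*lam^2*σ*j1 - a*lam^2*k1
      - σ*j1 + j0*k1 + j1*k0 + k1 = 0) ∧
    (-24*d*lam^2*m^2*σ*k2 - 24*c*lam^2*m^2*j2 + 2*k2^2 = 0) ∧
    (-6*d*lam^2*m^2*σ*k1 - 6*c*lam^2*m^2*j1 + 3*k1*k2 = 0) ∧
    (16*d*lam^2*m^2*σ*k2 + 16*c*lam^2*m^2*j2 - 8*d*lam^2*σ*k2 - 8*c*lam^2*j2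
      - 2*σ*k2 + 2*k0*k2 + k1^2 + 2*j2 = 0) ∧
    (2*d*lam^2*m^2*σ*k1 + 2*c*lam^2*m^2*j1 - d*lam^2*σ*k1 - c*lam^2*j1
      - σ*k1 + k0*k1 + j1 = 0) :=
  abcd_solution_4_1_2_verification_general a b c d lam m σ ε hc hε hpos R hR hden1 j0 j1 j2 k0 k1 k2
    hj1 hk1 hj2 hk2 hk0 hj0
end

section
/- (Verification of solution (4.2.2).) Let a, b, d ∈ ℝ with b − 2d ≠ 0, let λ > 0, σ ≠ 0, and m ∈ (0,1]. Define j0 = (a² − σ²(b−2d)·(b − 2d(1 + 2aλ²(2m²−1)))) / (σ²(b−2d)²), j2 = −12adλ²m²/(b−2d), j4 = 0, k0 = (a + σ²(b−2d)·(1 − 4dλ²(2m²−1))) / (σ(b−2d)), k2 = 12dλ²m²σ. Then λ, m, σ, j0, j2, j4, k0, k2 satisfy all five equations of the reduced coefficient system (coeffs 2 red). -/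
/-! In terms of `u = a / (σ (b - 2d))` the solution is polynomial: `j2 = -12 d λ² m² σ u`,
`k0 = σ (1 - 4 d λ² (2m² - 1)) + u`, `j0 = u² - 1 + 4 d λ² (2m² - 1) σ u`, and with
`a = u σ (b - 2d)` each of the five equations becomes a polynomial identity in `u`. -/

/-- The reduced coefficient system (coeffs 2 red), equations (I)–(V). -/
def CoeffsTwoRed (a b d lam m σ j0 j2 j4 k0 k2 : ℝ) : Prop :=
  (-6*j4*(20*b*lam^2*m^2*σ - k2) = 0) ∧
  (-24*b*lam^2*m^2*σ*j2 + 128*b*lam^2*m^2*σ*j4 - 24*a*lam^2*m^2*k2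
    - 64*b*lam^2*σ*j4 - 4*σ*j4 + 4*j2*k2 + 4*j4*k0 = 0) ∧
  (16*b*lam^2*m^2*σ*j2 - 24*b*lam^2*m^2*σ*j4 + 16*a*lam^2*m^2*k2
    - 8*b*lam^2*σ*j2 + 24*b*lam^2*σ*j4 - 8*a*lam^2*k2 - 2*σ*j2 + 2*j0*k2
    + 2*j2*k0 + 2*k2 = 0) ∧
  (-24*d*lam^2*m^2*σ*k2 + 2*k2^2 + 4*j4 = 0) ∧
  (16*d*lam^2*m^2*σ*k2 - 8*d*lam^2*σ*k2 - 2*σ*k2 + 2*k0*k2 + 2*j2 = 0)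

theorem coeffsTwoRed_polynomial_solution (b d lam m σ u : ℝ) :
    CoeffsTwoRed (u*σ*(b - 2*d)) b d lam m σ
      (u^2 - 1 + 4*d*lam^2*(2*m^2 - 1)*σ*u) (-12*d*lam^2*m^2*σ*u) 0
      (σ*(1 - 4*d*lam^2*(2*m^2 - 1)) + u) (12*d*lam^2*m^2*σ) :=
  ⟨by ring, by ring, by ring, by ring, by ring⟩

theorem abcd_solution_4_2_2_verification_general
    (a b d lam m σ : ℝ)
    (hbd : b - 2*d ≠ 0) (hσ : σ ≠ 0)
    (j0 j2 j4 k0 k2 : ℝ)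
    (hj0 : j0 = (a^2 - σ^2*(b - 2*d)*(b - 2*d*(1 + 2*a*lam^2*(2*m^2 - 1))))
        / (σ^2*(b - 2*d)^2))
    (hj2 : j2 = -12*a*d*lam^2*m^2/(b - 2*d))
    (hj4 : j4 = 0)
    (hk0 : k0 = (a + σ^2*(b - 2*d)*(1 - 4*d*lam^2*(2*m^2 - 1))) / (σ*(b - 2*d)))
    (hk2 : k2 = 12*d*lam^2*m^2*σ) :
    (-6*j4*(20*b*lam^2*m^2*σ - k2) = 0) ∧
    (-24*b*lam^2*m^2*σ*j2 + 128*b*lam^2*m^2*σ*j4 - 24*a*lam^2*m^2*k2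
      - 64*b*lam^2*σ*j4 - 4*σ*j4 + 4*j2*k2 + 4*j4*k0 = 0) ∧
    (16*b*lam^2*m^2*σ*j2 - 24*b*lam^2*m^2*σ*j4 + 16*a*lam^2*m^2*k2
      - 8*b*lam^2*σ*j2 + 24*b*lam^2*σ*j4 - 8*a*lam^2*k2 - 2*σ*j2 + 2*j0*k2
      + 2*j2*k0 + 2*k2 = 0) ∧
    (-24*d*lam^2*m^2*σ*k2 + 2*k2^2 + 4*j4 = 0) ∧
    (16*d*lam^2*m^2*σ*k2 - 8*d*lam^2*σ*k2 - 2*σ*k2 + 2*k0*k2 + 2*j2 = 0) := by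
  set u := a / (σ*(b - 2*d)) with hu
  have ha : a = u*σ*(b - 2*d) := by rw [hu]; field_simp
  have hj0' : j0 = u^2 - 1 + 4*d*lam^2*(2*m^2 - 1)*σ*u := by
    rw [hj0, hu]; field_simp; ring
  have hj2' : j2 = -12*d*lam^2*m^2*σ*u := by rw [hj2, hu]; field_simp
  have hk0' : k0 = σ*(1 - 4*d*lam^2*(2*m^2 - 1)) + u := by
    rw [hk0, hu]; field_simp; ring
  rw [hj0', hj2', hj4, hk0', hk2, ha]
  exact coeffsTwoRed_polynomial_solution b d lam m σ u

/-- verification that the explicit parameters of solution (4.2.2)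
satisfy all five equations of the reduced coefficient system (coeffs 2 red). -/
theorem abcd_solution_4_2_2_verification
    (a b d lam m σ : ℝ)
    (hbd : b - 2*d ≠ 0) (hlam : 0 < lam) (hσ : σ ≠ 0) (hm : m ∈ Set.Ioc (0 : ℝ) 1)
    (j0 j2 j4 k0 k2 : ℝ)
    (hj0 : j0 = (a^2 - σ^2*(b - 2*d)*(b - 2*d*(1 + 2*a*lam^2*(2*m^2 - 1))))
        / (σ^2*(b - 2*d)^2))
    (hj2 : j2 = -12*a*d*lam^2*m^2/(b - 2*d))
    (hj4 : j4 = 0)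
    (hk0 : k0 = (a + σ^2*(b - 2*d)*(1 - 4*d*lam^2*(2*m^2 - 1))) / (σ*(b - 2*d)))
    (hk2 : k2 = 12*d*lam^2*m^2*σ) :
    (-6*j4*(20*b*lam^2*m^2*σ - k2) = 0) ∧
    (-24*b*lam^2*m^2*σ*j2 + 128*b*lam^2*m^2*σ*j4 - 24*a*lam^2*m^2*k2
      - 64*b*lam^2*σ*j4 - 4*σ*j4 + 4*j2*k2 + 4*j4*k0 = 0) ∧
    (16*b*lam^2*m^2*σ*j2 - 24*b*lam^2*m^2*σ*j4 + 16*a*lam^2*m^2*k2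
      - 8*b*lam^2*σ*j2 + 24*b*lam^2*σ*j4 - 8*a*lam^2*k2 - 2*σ*j2 + 2*j0*k2
      + 2*j2*k0 + 2*k2 = 0) ∧
    (-24*d*lam^2*m^2*σ*k2 + 2*k2^2 + 4*j4 = 0) ∧
    (16*d*lam^2*m^2*σ*k2 - 8*d*lam^2*σ*k2 - 2*σ*k2 + 2*k0*k2 + 2*j2 = 0) :=
  abcd_solution_4_2_2_verification_general a b d lam m σ hbd hσ j0 j2 j4 k0 k2 hj0 hj2 hj4 hk0 hk2
end

section
/- (Semi-trivial solution (4.3).) Let c, d, σ ∈ ℝ, let λ > 0 and m ∈ (0,1], and let C, S, D : ℝ → ℝ be differentiable functions satisfying the Jacobi cnoidal identities. Define η(ξ) = −1 and w(ξ) = (−8dλ²m²σ + 4dλ²σ + σ) + 12dλ²m²σ·C(ξ)². Then (η, w) satisfies, for all ξ ∈ ℝ, the traveling-wave ODE system of the abcd-system with a = b = 0: −σ·η′(ξ) + w′(ξ) + (η·w)′(ξ) = 0 and −σ·w′(ξ) + η′(ξ) + w(ξ)·w′(ξ) + c·η‴(ξ) + d·σ·w‴(ξ) = 0. -/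
/-!
With `η ≡ -1` the first equation is `w' - w' = 0` and the second collapses to the traveling-wave
KdV equation `-σ w' + w w' + dσ w''' = 0`. Writing `u = C²`, the cnoidal identities give
`u'' = 2λ²(1 - m² + (4m² - 2) u - 3m² u²)`, hence `u''' = 2λ²(4m² - 2 - 6m² u) u'`, so for
`w = A + B u` the KdV equation becomes `B u' (A - σ + 2dσλ²(4m² - 2) + (B - 12dσλ²m²) u) = 0`;
the constants of (4.3) are exactly those making both coefficients vanish.
-/

section CnoidalSquare

variable {C S D : ℝ → ℝ} {lam m : ℝ}

theorem hasDerivAt_cn_sq (hC : Differentiable ℝ C)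
    (hC' : ∀ ξ, deriv C ξ = -lam * S ξ * D ξ) (ξ : ℝ) :
    HasDerivAt (fun x => C x ^ 2) (-2 * lam * C ξ * S ξ * D ξ) ξ :=
  ((hC ξ).hasDerivAt.fun_pow 2).congr_deriv (by rw [hC' ξ]; ring)

theorem deriv_cn_sq (hC : Differentiable ℝ C) (hC' : ∀ ξ, deriv C ξ = -lam * S ξ * D ξ) :
    deriv (fun x => C x ^ 2) = fun x => -2 * lam * C x * S x * D x :=
  funext fun ξ => (hasDerivAt_cn_sq hC hC' ξ).deriv

theorem deriv_deriv_cn_sq (hC : Differentiable ℝ C) (hS : Differentiable ℝ S)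
    (hD : Differentiable ℝ D)
    (hSid : ∀ ξ, S ξ ^ 2 = 1 - C ξ ^ 2) (hDid : ∀ ξ, D ξ ^ 2 = 1 - m ^ 2 + m ^ 2 * C ξ ^ 2)
    (hC' : ∀ ξ, deriv C ξ = -lam * S ξ * D ξ) (hS' : ∀ ξ, deriv S ξ = lam * C ξ * D ξ)
    (hD' : ∀ ξ, deriv D ξ = -m ^ 2 * lam * C ξ * S ξ) :
    deriv (deriv (fun x => C x ^ 2)) = fun x =>
      2 * lam ^ 2 * (1 - m ^ 2 + (4 * m ^ 2 - 2) * C x ^ 2 - 3 * m ^ 2 * (C x ^ 2) ^ 2) := by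
  rw [deriv_cn_sq hC hC']
  funext ξ
  have hprod := ((((hC ξ).hasDerivAt.const_mul (-2 * lam)).fun_mul (hS ξ).hasDerivAt).fun_mul
    (hD ξ).hasDerivAt)
  rw [hprod.deriv, hC' ξ, hS' ξ, hD' ξ]
  linear_combination (2 * lam ^ 2 * (S ξ ^ 2 - C ξ ^ 2)) * hDid ξ
    + (2 * lam ^ 2 * (1 - m ^ 2 + 2 * m ^ 2 * C ξ ^ 2)) * hSid ξ

theorem deriv_deriv_deriv_cn_sq (hC : Differentiable ℝ C) (hS : Differentiable ℝ S)
    (hD : Differentiable ℝ D)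
    (hSid : ∀ ξ, S ξ ^ 2 = 1 - C ξ ^ 2) (hDid : ∀ ξ, D ξ ^ 2 = 1 - m ^ 2 + m ^ 2 * C ξ ^ 2)
    (hC' : ∀ ξ, deriv C ξ = -lam * S ξ * D ξ) (hS' : ∀ ξ, deriv S ξ = lam * C ξ * D ξ)
    (hD' : ∀ ξ, deriv D ξ = -m ^ 2 * lam * C ξ * S ξ) (ξ : ℝ) :
    deriv (deriv (deriv (fun x => C x ^ 2))) ξ =
      2 * lam ^ 2 * (4 * m ^ 2 - 2 - 6 * m ^ 2 * C ξ ^ 2) * (-2 * lam * C ξ * S ξ * D ξ) := by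
  rw [deriv_deriv_cn_sq hC hS hD hSid hDid hC' hS' hD']
  have hu := hasDerivAt_cn_sq hC hC' ξ
  have hpoly := (((hu.const_mul (4 * m ^ 2 - 2)).const_add (1 - m ^ 2)).fun_sub
    ((hu.fun_pow 2).const_mul (3 * m ^ 2))).const_mul (2 * lam ^ 2)
  rw [hpoly.deriv]
  push_cast
  ring

end CnoidalSquare

theorem deriv_const_add_const_mul (a b : ℝ) (u : ℝ → ℝ) :
    deriv (fun x => a + b * u x) = fun x => b * deriv u x := by
  rw [deriv_const_add', deriv_const_mul_field']

theorem abcd_semitrivial_solution_4_3_general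
    (c d σ lam m : ℝ)
    (C S D : ℝ → ℝ)
    (hC : Differentiable ℝ C) (hS : Differentiable ℝ S) (hD : Differentiable ℝ D)
    (hSid : ∀ ξ : ℝ, S ξ ^ 2 = 1 - C ξ ^ 2)
    (hDid : ∀ ξ : ℝ, D ξ ^ 2 = 1 - m ^ 2 + m ^ 2 * C ξ ^ 2)
    (hC' : ∀ ξ : ℝ, deriv C ξ = -lam * S ξ * D ξ)
    (hS' : ∀ ξ : ℝ, deriv S ξ = lam * C ξ * D ξ)
    (hD' : ∀ ξ : ℝ, deriv D ξ = -m ^ 2 * lam * C ξ * S ξ)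
    (η w : ℝ → ℝ)
    (hη : ∀ x : ℝ, η x = -1)
    (hw : ∀ x : ℝ, w x = (-8*d*lam^2*m^2*σ + 4*d*lam^2*σ + σ)
        + 12*d*lam^2*m^2*σ * C x ^ 2) :
    ∀ ξ : ℝ,
      (-σ * deriv η ξ + deriv w ξ + deriv (fun x => η x * w x) ξ = 0) ∧
      (-σ * deriv w ξ + deriv η ξ + w ξ * deriv w ξ
        + c * deriv (deriv (deriv η)) ξ + d * σ * deriv (deriv (deriv w)) ξ = 0) := by
  intro ξ
  have hη_eq : η = fun _ => -1 := funext hη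
  have hw_eq : w = fun x => (-8*d*lam^2*m^2*σ + 4*d*lam^2*σ + σ)
      + 12*d*lam^2*m^2*σ * C x ^ 2 := funext hw
  have hw' : deriv w = fun x => 12*d*lam^2*m^2*σ * deriv (fun y => C y ^ 2) x := by
    rw [hw_eq, deriv_const_add_const_mul]
  have hw''' : deriv (deriv (deriv w)) ξ
      = 12*d*lam^2*m^2*σ * deriv (deriv (deriv (fun y => C y ^ 2))) ξ := by
    rw [hw', deriv_const_mul_field', deriv_const_mul_field']
  refine ⟨by simp [hη_eq], ?_⟩
  rw [hw''', deriv_deriv_deriv_cn_sq hC hS hD hSid hDid hC' hS' hD', hw', deriv_cn_sq hC hC',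
    hη_eq, hw ξ]
  simp only [deriv_const', mul_zero, add_zero]
  ring

/-- the semi-trivial cnoidal solution (4.3), `η ≡ -1` and
`w = (-8dλ²m²σ + 4dλ²σ + σ) + 12dλ²m²σ·cn²`, solves the traveling-wave ODE system
of the abcd-system with `a = b = 0`. -/
theorem abcd_semitrivial_solution_4_3
    (c d σ lam m : ℝ) (hlam : 0 < lam) (hm : m ∈ Set.Ioc (0 : ℝ) 1)
    (C S D : ℝ → ℝ)
    (hC : Differentiable ℝ C) (hS : Differentiable ℝ S) (hD : Differentiable ℝ D)
    (hSid : ∀ ξ : ℝ, S ξ ^ 2 = 1 - C ξ ^ 2)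
    (hDid : ∀ ξ : ℝ, D ξ ^ 2 = 1 - m ^ 2 + m ^ 2 * C ξ ^ 2)
    (hC' : ∀ ξ : ℝ, deriv C ξ = -lam * S ξ * D ξ)
    (hS' : ∀ ξ : ℝ, deriv S ξ = lam * C ξ * D ξ)
    (hD' : ∀ ξ : ℝ, deriv D ξ = -m ^ 2 * lam * C ξ * S ξ)
    (η w : ℝ → ℝ)
    (hη : ∀ x : ℝ, η x = -1)
    (hw : ∀ x : ℝ, w x = (-8*d*lam^2*m^2*σ + 4*d*lam^2*σ + σ)
        + 12*d*lam^2*m^2*σ * C x ^ 2) :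
    ∀ ξ : ℝ,
      (-σ * deriv η ξ + deriv w ξ + deriv (fun x => η x * w x) ξ = 0) ∧
      (-σ * deriv w ξ + deriv η ξ + w ξ * deriv w ξ
        + c * deriv (deriv (deriv η)) ξ + d * σ * deriv (deriv (deriv w)) ξ = 0) :=
  abcd_semitrivial_solution_4_3_general c d σ lam m C S D hC hS hD hSid hDid hC' hS' hD' η w hη hw
end

section
/- (Generic sech² solitary-wave sufficiency, m = 1 limit of the quadratic cnoidal ansatz.) Let a, b, c, d, σ, j0, j2, k0, k2 ∈ ℝ and λ > 0, and define sech t = 1/cosh t, η(ξ) = j0 + j2·sech²(λξ), w(ξ) = k0 + k2·sech²(λξ). Suppose the four equations hold: −24bλ²σj2 − 24aλ²k2 + 4j2k2 = 0; 8bλ²σj2 + 8aλ²k2 − 2σj2 + 2j0k2 + 2j2k0 + 2k2 = 0; −24dλ²σk2 − 24cλ²j2 + 2k2² = 0; 8dλ²σk2 + 8cλ²j2 − 2σk2 + 2k0k2 + 2j2 = 0. Then (η, w) satisfies, for all ξ ∈ ℝ, the traveling-wave ODE system of the abcd-system: −σ·η′(ξ) + w′(ξ) + (η·w)′(ξ)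 + a·w‴(ξ) + b·σ·η‴(ξ) = 0 and −σ·w′(ξ) + η′(ξ) + w(ξ)·w′(ξ) + c·η‴(ξ) + d·σ·w‴(ξ) = 0. -/
/-! The profile `φ = sech²(λξ)` solves `φ'' = 4λ²φ - 6λ²φ²`, hence `φ''' = (4λ² - 12λ²φ) φ'`.
For `η = j0 + j2 φ`, `w = k0 + k2 φ` every term of both traveling-wave equations is then a
multiple of `φ'`, and the two equations become `φ' (h₂ + φ h₁) / 2 = 0` and
`φ' (h₄ + φ h₃) / 2 = 0` in terms of the four coefficient equations `hᵢ`. -/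

open Real

section Profile

variable {φ φ' : ℝ → ℝ} {μ : ℝ}
  (hφ : ∀ x, HasDerivAt φ (φ' x) x) (hφ' : ∀ x, HasDerivAt φ' (4 * μ * φ x - 6 * μ * φ x ^ 2) x)

include hφ in
theorem deriv_const_add_mul_profile (c₀ c : ℝ) :
    deriv (fun x => c₀ + c * φ x) = fun x => c * φ' x :=
  funext fun x => (((hφ x).const_mul c).const_add c₀).deriv

include hφ hφ' in
theorem deriv_deriv_const_add_mul_profile (c₀ c : ℝ) :
    deriv (deriv (fun x => c₀ + c * φ x)) = fun x => c * (4 * μ * φ x - 6 * μ * φ x ^ 2) := by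
  rw [deriv_const_add_mul_profile hφ]
  exact funext fun x => ((hφ' x).const_mul c).deriv

include hφ hφ' in
theorem deriv_deriv_deriv_const_add_mul_profile (c₀ c : ℝ) :
    deriv (deriv (deriv (fun x => c₀ + c * φ x)))
      = fun x => c * ((4 * μ - 12 * μ * φ x) * φ' x) := by
  rw [deriv_deriv_const_add_mul_profile hφ hφ']
  refine funext fun x => HasDerivAt.deriv ?_
  refine ((((hφ x).const_mul (4 * μ)).sub (((hφ x).fun_pow 2).const_mul (6 * μ))).const_mul c
    ).congr_deriv ?_
  simp only [Nat.cast_ofNat]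
  ring

include hφ hφ' in
theorem abcd_traveling_wave_of_profile (a b c d σ j0 j2 k0 k2 : ℝ) (η w : ℝ → ℝ)
    (hη : ∀ ξ, η ξ = j0 + j2 * φ ξ) (hw : ∀ ξ, w ξ = k0 + k2 * φ ξ)
    (h1 : -24*b*μ*σ*j2 - 24*a*μ*k2 + 4*j2*k2 = 0)
    (h2 : 8*b*μ*σ*j2 + 8*a*μ*k2 - 2*σ*j2 + 2*j0*k2 + 2*j2*k0 + 2*k2 = 0)
    (h3 : -24*d*μ*σ*k2 - 24*c*μ*j2 + 2*k2^2 = 0)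
    (h4 : 8*d*μ*σ*k2 + 8*c*μ*j2 - 2*σ*k2 + 2*k0*k2 + 2*j2 = 0) (ξ : ℝ) :
    (-σ * deriv η ξ + deriv w ξ + deriv (fun x => η x * w x) ξ
        + a * deriv (deriv (deriv w)) ξ + b * σ * deriv (deriv (deriv η)) ξ = 0) ∧
      (-σ * deriv w ξ + deriv η ξ + w ξ * deriv w ξ
        + c * deriv (deriv (deriv η)) ξ + d * σ * deriv (deriv (deriv w)) ξ = 0) := by
  obtain rfl : η = fun x => j0 + j2 * φ x := funext hη
  obtain rfl : w = fun x => k0 + k2 * φ x := funext hw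
  have hprod :=
    (((hφ ξ).const_mul j2).const_add j0).fun_mul (((hφ ξ).const_mul k2).const_add k0)
  rw [hprod.deriv, deriv_deriv_deriv_const_add_mul_profile hφ hφ',
    deriv_deriv_deriv_const_add_mul_profile hφ hφ', deriv_const_add_mul_profile hφ,
    deriv_const_add_mul_profile hφ]
  constructor
  · linear_combination (φ' ξ / 2) * h2 + (φ' ξ * φ ξ / 2) * h1
  · linear_combination (φ' ξ / 2) * h4 + (φ' ξ * φ ξ / 2) * h3

end Profile

theorem hasDerivAt_sech_sq (lam x : ℝ) :
    HasDerivAt (fun ξ => (1 / cosh (lam * ξ)) ^ 2)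
      (-2 * lam * sinh (lam * x) / cosh (lam * x) ^ 3) x := by
  have hc : cosh (lam * x) ≠ 0 := (cosh_pos _).ne'
  have := (((hasDerivAt_id' x).const_mul lam).cosh.inv hc).fun_pow 2
  simp only [one_div]
  refine this.congr_deriv ?_
  simp only [Pi.inv_apply, Nat.cast_ofNat, Nat.reduceSub, pow_one]
  field_simp

theorem hasDerivAt_deriv_sech_sq (lam x : ℝ) :
    HasDerivAt (fun ξ => -2 * lam * sinh (lam * ξ) / cosh (lam * ξ) ^ 3)
      (4 * lam ^ 2 * (1 / cosh (lam * x)) ^ 2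
        - 6 * lam ^ 2 * ((1 / cosh (lam * x)) ^ 2) ^ 2) x := by
  have hc : cosh (lam * x) ≠ 0 := (cosh_pos _).ne'
  have := (((hasDerivAt_id' x).const_mul lam).sinh.const_mul (-2 * lam)).div
    (((hasDerivAt_id' x).const_mul lam).cosh.fun_pow 3) (pow_ne_zero 3 hc)
  refine this.congr_deriv ?_
  field_simp
  linear_combination (6 * lam ^ 2 * cosh (lam * x) ^ 2) * sinh_sq (lam * x)

theorem abcd_sech_squared_solitary_wave_general
    (a b c d σ j0 j2 k0 k2 lam : ℝ)
    (η w : ℝ → ℝ)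
    (hη : ∀ ξ : ℝ, η ξ = j0 + j2 * (1 / Real.cosh (lam * ξ)) ^ 2)
    (hw : ∀ ξ : ℝ, w ξ = k0 + k2 * (1 / Real.cosh (lam * ξ)) ^ 2)
    (h1 : -24*b*lam^2*σ*j2 - 24*a*lam^2*k2 + 4*j2*k2 = 0)
    (h2 : 8*b*lam^2*σ*j2 + 8*a*lam^2*k2 - 2*σ*j2 + 2*j0*k2 + 2*j2*k0 + 2*k2 = 0)
    (h3 : -24*d*lam^2*σ*k2 - 24*c*lam^2*j2 + 2*k2^2 = 0)
    (h4 : 8*d*lam^2*σ*k2 + 8*c*lam^2*j2 - 2*σ*k2 + 2*k0*k2 + 2*j2 = 0) :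
    ∀ ξ : ℝ,
      (-σ * deriv η ξ + deriv w ξ + deriv (fun x => η x * w x) ξ
        + a * deriv (deriv (deriv w)) ξ + b * σ * deriv (deriv (deriv η)) ξ = 0) ∧
      (-σ * deriv w ξ + deriv η ξ + w ξ * deriv w ξ
        + c * deriv (deriv (deriv η)) ξ + d * σ * deriv (deriv (deriv w)) ξ = 0) :=
  abcd_traveling_wave_of_profile (hasDerivAt_sech_sq lam) (hasDerivAt_deriv_sech_sq lam)
    a b c d σ j0 j2 k0 k2 η w hη hw h1 h2 h3 h4

/-- generic sech² solitary-wave sufficiency (the `m = 1` limit of the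
quadratic cnoidal ansatz): if the four coefficient equations hold, then
`η = j0 + j2·sech²(λξ)`, `w = k0 + k2·sech²(λξ)` solve the traveling-wave ODE system
of the abcd-system. -/
theorem abcd_sech_squared_solitary_wave
    (a b c d σ j0 j2 k0 k2 lam : ℝ) (hlam : 0 < lam)
    (η w : ℝ → ℝ)
    (hη : ∀ ξ : ℝ, η ξ = j0 + j2 * (1 / Real.cosh (lam * ξ)) ^ 2)
    (hw : ∀ ξ : ℝ, w ξ = k0 + k2 * (1 / Real.cosh (lam * ξ)) ^ 2)
    (h1 : -24*b*lam^2*σ*j2 - 24*a*lam^2*k2 + 4*j2*k2 = 0)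
    (h2 : 8*b*lam^2*σ*j2 + 8*a*lam^2*k2 - 2*σ*j2 + 2*j0*k2 + 2*j2*k0 + 2*k2 = 0)
    (h3 : -24*d*lam^2*σ*k2 - 24*c*lam^2*j2 + 2*k2^2 = 0)
    (h4 : 8*d*lam^2*σ*k2 + 8*c*lam^2*j2 - 2*σ*k2 + 2*k0*k2 + 2*j2 = 0) :
    ∀ ξ : ℝ,
      (-σ * deriv η ξ + deriv w ξ + deriv (fun x => η x * w x) ξ
        + a * deriv (deriv (deriv w)) ξ + b * σ * deriv (deriv (deriv η)) ξ = 0) ∧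
      (-σ * deriv w ξ + deriv η ξ + w ξ * deriv w ξ
        + c * deriv (deriv (deriv η)) ξ + d * σ * deriv (deriv (deriv w)) ξ = 0) :=
  abcd_sech_squared_solitary_wave_general a b c d σ j0 j2 k0 k2 lam η w hη hw h1 h2 h3 h4
end

section
/- (Generic sech²/sech⁴ solitary-wave sufficiency for c = 0, m = 1 limit of the quartic cnoidal ansatz.) Let a, b, d, σ, j0, j2, j4, k0, k2 ∈ ℝ and λ > 0, and define sech t = 1/cosh t, η(ξ) = j0 + j2·sech²(λξ) + j4·sech⁴(λξ), w(ξ) = k0 + k2·sech²(λξ). Suppose the five equations hold: j4·(20bλ²σ − k2) = 0; −24bλ²σj2 + 64bλ²σj4 − 24aλ²k2 − 4σj4 + 4j2k2 + 4j4k0 = 0; 8bλ²σj2 + 8aλ²k2 − 2σj2 + 2j0k2 + 2j2k0 + 2k2 = 0; −24dλ²σk2 + 2k2² + 4j4 = 0; 8dλ²σk2 − 2σk2 + 2k0k2 + 2j2 = 0. Then (η, w) satisfies, for all ξ ∈ ℝ, the traveling-wave ODE system of the abcd-system with c = 0: −σ·η′(ξ) + w′(ξ) + (η·w)′(ξ)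 + a·w‴(ξ) + b·σ·η‴(ξ) = 0 and −σ·w′(ξ) + η′(ξ) + w(ξ)·w′(ξ) + d·σ·w‴(ξ) = 0. -/
/-!
In the variable `T = tanh (lam * ξ)` one has `sech² = 1 - T²` and `d/dξ = lam (1 - T²) d/dT`,
so `η`, `w` and all their derivatives are polynomials in `T`. Both left-hand sides of the system
are then `lam * T` times a polynomial in `T` whose coefficients are combinations of the five
coefficient equations.
-/

open Polynomial Real

theorem Real.one_sub_tanh_sq (x : ℝ) : 1 - tanh x ^ 2 = (1 / cosh x) ^ 2 := by
  have hc : cosh x ≠ 0 := (cosh_pos x).ne'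
  rw [tanh_eq_sinh_div_cosh]
  field_simp
  linear_combination cosh_sq_sub_sinh_sq x

theorem Real.hasDerivAt_tanh (x : ℝ) : HasDerivAt tanh (1 - tanh x ^ 2) x := by
  have hc : cosh x ≠ 0 := (cosh_pos x).ne'
  have h : HasDerivAt (fun y => sinh y / cosh y) _ x :=
    (hasDerivAt_sinh x).div (hasDerivAt_cosh x) hc
  rw [← funext tanh_eq_sinh_div_cosh] at h
  refine h.congr_deriv ?_
  rw [one_sub_tanh_sq]
  field_simp
  exact cosh_sq_sub_sinh_sq x

noncomputable def tanhDerivOp (lam : ℝ) (p : ℝ[X]) : ℝ[X] :=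
  C lam * (1 - X ^ 2) * derivative p

theorem hasDerivAt_eval_tanh (lam : ℝ) (p : ℝ[X]) (x : ℝ) :
    HasDerivAt (fun y => p.eval (tanh (lam * y))) ((tanhDerivOp lam p).eval (tanh (lam * x)))
      x := by
  have hlin : HasDerivAt (fun y => lam * y) lam x := by
    simpa using (hasDerivAt_id x).const_mul lam
  refine ((p.hasDerivAt _).comp x ((hasDerivAt_tanh _).comp x hlin)).congr_deriv ?_
  simp only [tanhDerivOp, Function.comp_apply, eval_mul, eval_C, eval_sub, eval_one, eval_pow,
    eval_X]
  ring

theorem deriv_eval_tanh (lam : ℝ) (p : ℝ[X]) :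
    deriv (fun x => p.eval (tanh (lam * x))) =
      fun x => (tanhDerivOp lam p).eval (tanh (lam * x)) :=
  funext fun x => (hasDerivAt_eval_tanh lam p x).deriv

theorem abcd_sech_quartic_solitary_wave_c_eq_zero_general
    (a b d σ j0 j2 j4 k0 k2 lam : ℝ)
    (η w : ℝ → ℝ)
    (hη : ∀ ξ : ℝ, η ξ = j0 + j2 * (1 / Real.cosh (lam * ξ)) ^ 2
        + j4 * (1 / Real.cosh (lam * ξ)) ^ 4)
    (hw : ∀ ξ : ℝ, w ξ = k0 + k2 * (1 / Real.cosh (lam * ξ)) ^ 2)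
    (h1 : j4*(20*b*lam^2*σ - k2) = 0)
    (h2 : -24*b*lam^2*σ*j2 + 64*b*lam^2*σ*j4 - 24*a*lam^2*k2 - 4*σ*j4
        + 4*j2*k2 + 4*j4*k0 = 0)
    (h3 : 8*b*lam^2*σ*j2 + 8*a*lam^2*k2 - 2*σ*j2 + 2*j0*k2 + 2*j2*k0 + 2*k2 = 0)
    (h4 : -24*d*lam^2*σ*k2 + 2*k2^2 + 4*j4 = 0)
    (h5 : 8*d*lam^2*σ*k2 - 2*σ*k2 + 2*k0*k2 + 2*j2 = 0) :
    ∀ ξ : ℝ,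
      (-σ * deriv η ξ + deriv w ξ + deriv (fun x => η x * w x) ξ
        + a * deriv (deriv (deriv w)) ξ + b * σ * deriv (deriv (deriv η)) ξ = 0) ∧
      (-σ * deriv w ξ + deriv η ξ + w ξ * deriv w ξ
        + d * σ * deriv (deriv (deriv w)) ξ = 0) := by
  set P : ℝ[X] := C j0 + C j2 * (1 - X ^ 2) + C j4 * (1 - X ^ 2) ^ 2
  set Q : ℝ[X] := C k0 + C k2 * (1 - X ^ 2)
  have hηP : η = fun x => P.eval (tanh (lam * x)) := by
    ext x
    simp only [hη, P, eval_add, eval_mul, eval_C, eval_sub, eval_one, eval_pow, eval_X,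
      one_sub_tanh_sq]
    ring
  have hwQ : w = fun x => Q.eval (tanh (lam * x)) := by
    ext x
    simp only [hw, Q, eval_add, eval_mul, eval_C, eval_sub, eval_one, eval_pow, eval_X,
      one_sub_tanh_sq]
  have hηw : (fun x => η x * w x) = fun x => (P * Q).eval (tanh (lam * x)) := by
    simp only [hηP, hwQ, eval_mul]
  intro ξ
  rw [hηw, hηP, hwQ]
  simp only [deriv_eval_tanh]
  simp only [P, Q, tanhDerivOp, derivative_add, derivative_mul, derivative_C, derivative_sub,
    derivative_one, derivative_zero, derivative_pow, derivative_X, eval_add, eval_mul, eval_C,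
    eval_sub, eval_one, eval_pow, eval_X, eval_zero]
  set t := tanh (lam * ξ)
  constructor
  · linear_combination (lam * t * (6 * (1 - t ^ 2) ^ 3)) * h1
      + (lam * t * (-(1 - t ^ 2) ^ 2)) * h2 + (lam * t * (t ^ 2 - 1)) * h3
  · linear_combination (lam * t * (t ^ 2 - 1)) * h5 + (lam * t * (-(1 - t ^ 2) ^ 2)) * h4

/-- generic sech²/sech⁴ solitary-wave sufficiency for `c = 0` (the
`m = 1` limit of the quartic cnoidal ansatz): if the five coefficient equations hold,
then `η = j0 + j2·sech²(λξ) + j4·sech⁴(λξ)`, `w = k0 + k2·sech²(λξ)` solve the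
traveling-wave ODE system of the abcd-system with `c = 0`. -/
theorem abcd_sech_quartic_solitary_wave_c_eq_zero
    (a b d σ j0 j2 j4 k0 k2 lam : ℝ) (hlam : 0 < lam)
    (η w : ℝ → ℝ)
    (hη : ∀ ξ : ℝ, η ξ = j0 + j2 * (1 / Real.cosh (lam * ξ)) ^ 2
        + j4 * (1 / Real.cosh (lam * ξ)) ^ 4)
    (hw : ∀ ξ : ℝ, w ξ = k0 + k2 * (1 / Real.cosh (lam * ξ)) ^ 2)
    (h1 : j4*(20*b*lam^2*σ - k2) = 0)
    (h2 : -24*b*lam^2*σ*j2 + 64*b*lam^2*σ*j4 - 24*a*lam^2*k2 - 4*σ*j4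
        + 4*j2*k2 + 4*j4*k0 = 0)
    (h3 : 8*b*lam^2*σ*j2 + 8*a*lam^2*k2 - 2*σ*j2 + 2*j0*k2 + 2*j2*k0 + 2*k2 = 0)
    (h4 : -24*d*lam^2*σ*k2 + 2*k2^2 + 4*j4 = 0)
    (h5 : 8*d*lam^2*σ*k2 - 2*σ*k2 + 2*k0*k2 + 2*j2 = 0) :
    ∀ ξ : ℝ,
      (-σ * deriv η ξ + deriv w ξ + deriv (fun x => η x * w x) ξ
        + a * deriv (deriv (deriv w)) ξ + b * σ * deriv (deriv (deriv η)) ξ = 0) ∧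
      (-σ * deriv w ξ + deriv η ξ + w ξ * deriv w ξ
        + d * σ * deriv (deriv (deriv w)) ξ = 0) :=
  abcd_sech_quartic_solitary_wave_c_eq_zero_general a b d σ j0 j2 j4 k0 k2 lam η w hη hw h1 h2 h3 h4
    h5
end

section
/- (Limit of solution (4.1.2) to solution (4.2.2) as c → 0.) Let a, b, d ∈ ℝ, λ > 0, m ∈ (0,1], σ ≠ 0, d ≠ 0, and assume σ(b − 2d) > 0. Regard the coefficients j0(c), j2(c), k0(c), k2(c) of solution (4.1.2) with the bottom sign choice ε = −1 as functions of the parameter c. Then, as c → 0 with c ≠ 0: j2(c) → −12adλ²m²/(b−2d); k2(c) → 12dλ²m²σ; k0(c) → (a + σ²(b−2d)·(1 − 4dλ²(2m²−1)))/(σ(b−2d)); and j0(c) → (a² − σ²(b−2d)·(b − 2d(1 + 2aλ²(2m²−1))))/(σ²(b−2d)²). That is, the coefficients of solution (4.1.2) with the bottom signs converge to the corresponding coefficients of solution (4.2.2). -/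
open Filter Topology

/-!
Put `K = σ (b - 2d) > 0`, so that `R(0) = K` and `R'(0) = 4a/K`. The bracket of `j2` is
`4ac - bσ (R(c) - K)`, hence `j2(c)` is an affine function of the difference quotient
`(R(c) - K)/c`, which tends to `R'(0)`; `k2` is continuous at `0`.

On `R² = 8ac + K²` the denominator factor of `j0` equals `(σ(b+2d) + εR)² / 2`, and the
remaining coefficients are functions of the first two:
`k0 = σ - (2m²-1) k2 / (3m²) - j2 / k2` and `j0 = (j2 / k2)² - (2m²-1) j2 / (3m²) - 1`.
As `k2 → 12 d λ² m² σ ≠ 0`, the limits of `k0` and `j0` follow from those of `j2` and `k2`.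
-/

namespace Solution412

variable (a b d lam m σ ε : ℝ)

/- The coefficients of solution (4.1.2) for the sign `ε`, with `r` standing for `R(c)`. -/
noncomputable def j2 (c r : ℝ) : ℝ := (3*lam^2*m^2/(2*c)) * (4*a*c + b*σ^2*(b - 2*d) + ε*b*σ*r)

noncomputable def k2 (r : ℝ) : ℝ := 3*lam^2*m^2 * (σ*(b + 2*d) + ε*r)

noncomputable def k0 (c r : ℝ) : ℝ :=
  (-8*b^2*c*lam^2*m^2*σ^2 - 32*c*d^2*lam^2*m^2*σ^2 - 32*a*c^2*lam^2*m^2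
      + 4*b^2*c*lam^2*σ^2 + 16*c*d^2*lam^2*σ^2 + 16*a*c^2*lam^2 - b^2*σ^2
      + 2*b*c*σ^2 + 2*b*d*σ^2 + 4*c*d*σ^2 - 4*a*c
      - ε*σ*r*(8*b*c*lam^2*m^2 + 16*c*d*lam^2*m^2 - 4*b*c*lam^2
        - 8*c*d*lam^2 + b - 2*c))
    / (2*c*(σ*(b + 2*d) + ε*r))

noncomputable def j0 (c r : ℝ) : ℝ :=
  (-8*b^4*c*lam^2*m^2*σ^4 + 16*b^3*c*d*lam^2*m^2*σ^4
      - 64*a*b^2*c^2*lam^2*m^2*σ^2 - 32*a*b*c^2*d*lam^2*m^2*σ^2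
      - 64*a*c^2*d^2*lam^2*m^2*σ^2 + 4*b^4*c*lam^2*σ^4 - 8*b^3*c*d*lam^2*σ^4
      - 64*a^2*c^3*lam^2*m^2 + 32*a*b^2*c^2*lam^2*σ^2 + 16*a*b*c^2*d*lam^2*σ^2
      + 32*a*c^2*d^2*lam^2*σ^2 + b^4*σ^4 - 4*b^3*d*σ^4 + 4*b^2*d^2*σ^4
      + 32*a^2*c^3*lam^2 + 8*a*b^2*c*σ^2 - 8*a*b*c*d*σ^2 - 4*b^2*c^2*σ^2
      - 16*c^2*d^2*σ^2 + 8*a^2*c^2 - 16*a*c^3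
      - ε*σ*r*(8*b^3*c*lam^2*m^2*σ^2 + 32*a*b*c^2*lam^2*m^2
        + 32*a*c^2*d*lam^2*m^2 - 4*b^3*c*lam^2*σ^2 - 16*a*b*c^2*lam^2
        - 16*a*c^2*d*lam^2 - b^3*σ^2 + 2*b^2*d*σ^2 - 4*a*b*c + 4*b*c^2
        + 8*c^2*d))
    / (4*c^2*(4*a*c + σ^2*(b^2 + 4*d^2) + ε*σ*(b + 2*d)*r))

noncomputable def R (c : ℝ) : ℝ := √(8*a*c + σ^2*(b - 2*d)^2)

variable {a b d lam m σ ε} {c r : ℝ}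

theorem j0_denom_eq_half_sq (hε : ε^2 = 1) (hr : r^2 = 8*a*c + (σ*(b - 2*d))^2) :
    4*a*c + σ^2*(b^2 + 4*d^2) + ε*σ*(b + 2*d)*r = (σ*(b + 2*d) + ε*r)^2 / 2 := by
  linear_combination (-1/2 : ℝ) * hr - r^2/2 * hε

theorem k0_eq (hε : ε^2 = 1) (hr : r^2 = 8*a*c + (σ*(b - 2*d))^2) (hc : c ≠ 0)
    (hlam : lam ≠ 0) (hm : m ≠ 0) (hk : k2 b d lam m σ ε r ≠ 0) :
    k0 a b d lam m σ ε c r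
      = σ - (2*m^2 - 1) * k2 b d lam m σ ε r / (3*m^2)
          - j2 a b d lam m σ ε c r / k2 b d lam m σ ε r := by
  have hk' : σ*(b + 2*d) + ε*r ≠ 0 := right_ne_zero_of_mul hk
  unfold k0 j2 k2
  generalize hkdef : σ*(b + 2*d) + ε*r = k at hk' ⊢
  field_simp
  subst hkdef
  linear_combination (-4*lam^2*(2*m^2-1)*c) * j0_denom_eq_half_sq hε hr

theorem j0_eq (hε : ε^2 = 1) (hr : r^2 = 8*a*c + (σ*(b - 2*d))^2) (hc : c ≠ 0)
    (hlam : lam ≠ 0) (hm : m ≠ 0) (hk : k2 b d lam m σ ε r ≠ 0) :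
    j0 a b d lam m σ ε c r
      = (j2 a b d lam m σ ε c r / k2 b d lam m σ ε r)^2
          - (2*m^2 - 1) * j2 a b d lam m σ ε c r / (3*m^2) - 1 := by
  have hk' : σ*(b + 2*d) + ε*r ≠ 0 := right_ne_zero_of_mul hk
  have hE := j0_denom_eq_half_sq hε hr
  unfold j0 j2 k2
  rw [hE]
  generalize hkdef : σ*(b + 2*d) + ε*r = k at hk' ⊢
  field_simp
  subst hkdef
  -- With `X` the bracket of `j2`, `E` the denominator factor of `j0` and `t = λ²(2m²-1)`, the
  -- numerator of `j0` is `X²/2 - 2tcXE - 4c²E` once `ε²r²` is replaced by `8ac + K²`.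
  linear_combination
    8 * (-2*lam^2*(2*m^2 - 1)*c*(4*a*c + b*σ^2*(b - 2*d) + ε*b*σ*r) - 4*c^2) * hE
      - 8 * (b^2*σ^2/2 - 2*lam^2*(2*m^2 - 1)*c*b*σ*(σ*(b + 2*d)))
        * (ε^2 * hr + (8*a*c + (σ*(b - 2*d))^2) * hε)

theorem hasDerivAt_sqrt_mul_add_sq {α K : ℝ} (hK : 0 < K) :
    HasDerivAt (fun c => √(α*c + K^2)) (α / (2*K)) 0 := by
  have h := (((hasDerivAt_id (0:ℝ)).const_mul α).add_const (K^2)).sqrt (by simp [hK.ne'])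
  simpa [Real.sqrt_sq hK.le] using h

section BottomSign

variable (a : ℝ) {b d σ : ℝ} (lam m : ℝ)

theorem eventually_R_sq_eq (hK : 0 < σ*(b - 2*d)) :
    ∀ᶠ c in 𝓝 0, R a b d σ c ^ 2 = 8*a*c + (σ*(b - 2*d))^2 := by
  have hpos : ∀ᶠ c in 𝓝 (0:ℝ), 0 < 8*a*c + (σ*(b - 2*d))^2 :=
    continuousAt_const.eventually_lt (by fun_prop) (by simpa using pow_pos hK 2)
  filter_upwards [hpos] with c hc
  rw [R, ← mul_pow, Real.sq_sqrt hc.le]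

theorem R_zero (hK : 0 < σ*(b - 2*d)) : R a b d σ 0 = σ*(b - 2*d) := by
  simp [R, ← mul_pow, Real.sqrt_sq hK.le]

theorem hasDerivAt_R (hK : 0 < σ*(b - 2*d)) :
    HasDerivAt (R a b d σ) (8*a / (2*(σ*(b - 2*d)))) 0 := by
  convert hasDerivAt_sqrt_mul_add_sq (α := 8*a) hK using 2 with c
  rw [R, mul_pow]

theorem tendsto_R (hK : 0 < σ*(b - 2*d)) :
    Tendsto (R a b d σ) (𝓝[≠] 0) (𝓝 (σ*(b - 2*d))) := by
  rw [← R_zero a hK]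
  exact (hasDerivAt_R a hK).continuousAt.tendsto.mono_left nhdsWithin_le_nhds

theorem tendsto_k2 (hK : 0 < σ*(b - 2*d)) :
    Tendsto (fun c => k2 b d lam m σ (-1) (R a b d σ c)) (𝓝[≠] 0) (𝓝 (12*d*lam^2*m^2*σ)) := by
  rw [show 12*d*lam^2*m^2*σ = 3*lam^2*m^2*(σ*(b + 2*d) + (-1)*(σ*(b - 2*d))) by ring]
  exact ((tendsto_const_nhds.add ((tendsto_R a hK).const_mul (-1))).const_mul _)

theorem tendsto_j2 (hK : 0 < σ*(b - 2*d)) :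
    Tendsto (fun c => j2 a b d lam m σ (-1) c (R a b d σ c)) (𝓝[≠] 0)
      (𝓝 (-12*a*d*lam^2*m^2 / (b - 2*d))) := by
  have hslope := hasDerivAt_iff_tendsto_slope.mp (hasDerivAt_R a hK)
  have h := ((hslope.const_mul (b*σ/2)).const_sub (2*a)).const_mul (3*lam^2*m^2)
  have hbd : b - 2*d ≠ 0 := right_ne_zero_of_mul hK.ne'
  have hσ : σ ≠ 0 := left_ne_zero_of_mul hK.ne'
  rw [show -12*a*d*lam^2*m^2 / (b - 2*d)
      = 3*lam^2*m^2*(2*a - b*σ/2*(8*a / (2*(σ*(b - 2*d))))) by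
        rw [eq_comm, ← sub_eq_zero]; field_simp; ring]
  refine h.congr' (eventually_mem_nhdsWithin.mono fun c hc => ?_)
  have hc : c ≠ 0 := hc
  rw [slope_def_field, R_zero a hK]
  unfold j2
  field_simp
  ring

theorem tendsto_k0 (hK : 0 < σ*(b - 2*d)) (hlam : lam ≠ 0) (hm : m ≠ 0) (hd : d ≠ 0) :
    Tendsto (fun c => k0 a b d lam m σ (-1) c (R a b d σ c)) (𝓝[≠] 0)
      (𝓝 ((a + σ^2*(b - 2*d)*(1 - 4*d*lam^2*(2*m^2 - 1))) / (σ*(b - 2*d)))) := by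
  have hbd : b - 2*d ≠ 0 := right_ne_zero_of_mul hK.ne'
  have hσ : σ ≠ 0 := left_ne_zero_of_mul hK.ne'
  have hk2 : 12*d*lam^2*m^2*σ ≠ 0 := by simp [*]
  have h := ((tendsto_const_nhds (x := σ)).sub
    (((tendsto_k2 a lam m hK).const_mul (2*m^2 - 1)).div_const (3*m^2))).sub
    ((tendsto_j2 a lam m hK).div (tendsto_k2 a lam m hK) hk2)
  convert h.congr' ?_ using 2
  · field_simp
    ring
  · filter_upwards [self_mem_nhdsWithin, nhdsWithin_le_nhds (eventually_R_sq_eq a hK),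
      (tendsto_k2 a lam m hK).eventually_ne hk2] with c hc hr hk
    exact (k0_eq (by norm_num) hr hc hlam hm hk).symm

theorem tendsto_j0 (hK : 0 < σ*(b - 2*d)) (hlam : lam ≠ 0) (hm : m ≠ 0) (hd : d ≠ 0) :
    Tendsto (fun c => j0 a b d lam m σ (-1) c (R a b d σ c)) (𝓝[≠] 0)
      (𝓝 ((a^2 - σ^2*(b - 2*d)*(b - 2*d*(1 + 2*a*lam^2*(2*m^2 - 1))))
        / (σ^2*(b - 2*d)^2))) := by
  have hbd : b - 2*d ≠ 0 := right_ne_zero_of_mul hK.ne'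
  have hσ : σ ≠ 0 := left_ne_zero_of_mul hK.ne'
  have hk2 : 12*d*lam^2*m^2*σ ≠ 0 := by simp [*]
  have hq := (tendsto_j2 a lam m hK).div (tendsto_k2 a lam m hK) hk2
  have h := ((hq.pow 2).sub (((tendsto_j2 a lam m hK).const_mul (2*m^2 - 1)).div_const
    (3*m^2))).sub_const 1
  convert h.congr' ?_ using 2
  · field_simp
    ring
  · filter_upwards [self_mem_nhdsWithin, nhdsWithin_le_nhds (eventually_R_sq_eq a hK),
      (tendsto_k2 a lam m hK).eventually_ne hk2] with c hc hr hk
    exact (j0_eq (by norm_num) hr hc hlam hm hk).symm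

end BottomSign

end Solution412

theorem abcd_solution_4_1_2_limits_to_4_2_2_general
    (a b d lam m σ : ℝ)
    (hlam : 0 < lam) (hm : m ∈ Set.Ioc (0 : ℝ) 1) (hd : d ≠ 0)
    (hsgn : σ*(b - 2*d) > 0)
    (R : ℝ → ℝ) (hR : ∀ c : ℝ, R c = Real.sqrt (8*a*c + σ^2*(b - 2*d)^2)) :
    Tendsto (fun c : ℝ =>
        (3*lam^2*m^2/(2*c)) * (4*a*c + b*σ^2*(b - 2*d) + (-1)*b*σ*R c))
      (nhdsWithin 0 {(0:ℝ)}ᶜ) (nhds (-12*a*d*lam^2*m^2/(b - 2*d))) ∧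
    Tendsto (fun c : ℝ => 3*lam^2*m^2 * (σ*(b + 2*d) + (-1)*R c))
      (nhdsWithin 0 {(0:ℝ)}ᶜ) (nhds (12*d*lam^2*m^2*σ)) ∧
    Tendsto (fun c : ℝ =>
        (-8*b^2*c*lam^2*m^2*σ^2 - 32*c*d^2*lam^2*m^2*σ^2 - 32*a*c^2*lam^2*m^2
          + 4*b^2*c*lam^2*σ^2 + 16*c*d^2*lam^2*σ^2 + 16*a*c^2*lam^2 - b^2*σ^2
          + 2*b*c*σ^2 + 2*b*d*σ^2 + 4*c*d*σ^2 - 4*a*c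
          - (-1)*σ*(R c)*(8*b*c*lam^2*m^2 + 16*c*d*lam^2*m^2 - 4*b*c*lam^2
            - 8*c*d*lam^2 + b - 2*c))
        / (2*c*(σ*(b + 2*d) + (-1)*R c)))
      (nhdsWithin 0 {(0:ℝ)}ᶜ)
      (nhds ((a + σ^2*(b - 2*d)*(1 - 4*d*lam^2*(2*m^2 - 1))) / (σ*(b - 2*d)))) ∧
    Tendsto (fun c : ℝ =>
        (-8*b^4*c*lam^2*m^2*σ^4 + 16*b^3*c*d*lam^2*m^2*σ^4
          - 64*a*b^2*c^2*lam^2*m^2*σ^2 - 32*a*b*c^2*d*lam^2*m^2*σ^2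
          - 64*a*c^2*d^2*lam^2*m^2*σ^2 + 4*b^4*c*lam^2*σ^4 - 8*b^3*c*d*lam^2*σ^4
          - 64*a^2*c^3*lam^2*m^2 + 32*a*b^2*c^2*lam^2*σ^2 + 16*a*b*c^2*d*lam^2*σ^2
          + 32*a*c^2*d^2*lam^2*σ^2 + b^4*σ^4 - 4*b^3*d*σ^4 + 4*b^2*d^2*σ^4
          + 32*a^2*c^3*lam^2 + 8*a*b^2*c*σ^2 - 8*a*b*c*d*σ^2 - 4*b^2*c^2*σ^2
          - 16*c^2*d^2*σ^2 + 8*a^2*c^2 - 16*a*c^3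
          - (-1)*σ*(R c)*(8*b^3*c*lam^2*m^2*σ^2 + 32*a*b*c^2*lam^2*m^2
            + 32*a*c^2*d*lam^2*m^2 - 4*b^3*c*lam^2*σ^2 - 16*a*b*c^2*lam^2
            - 16*a*c^2*d*lam^2 - b^3*σ^2 + 2*b^2*d*σ^2 - 4*a*b*c + 4*b*c^2
            + 8*c^2*d))
        / (4*c^2*(4*a*c + σ^2*(b^2 + 4*d^2) + (-1)*σ*(b + 2*d)*R c)))
      (nhdsWithin 0 {(0:ℝ)}ᶜ)
      (nhds ((a^2 - σ^2*(b - 2*d)*(b - 2*d*(1 + 2*a*lam^2*(2*m^2 - 1))))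
        / (σ^2*(b - 2*d)^2))) := by
  obtain rfl : R = Solution412.R a b d σ := funext hR
  exact ⟨Solution412.tendsto_j2 a lam m hsgn, Solution412.tendsto_k2 a lam m hsgn,
    Solution412.tendsto_k0 a lam m hsgn hlam.ne' hm.1.ne' hd,
    Solution412.tendsto_j0 a lam m hsgn hlam.ne' hm.1.ne' hd⟩

/-- as `c → 0` (with `c ≠ 0`), the coefficients of solution (4.1.2)
with the bottom sign choice `ε = -1` converge to the corresponding coefficients of
solution (4.2.2). -/
theorem abcd_solution_4_1_2_limits_to_4_2_2
    (a b d lam m σ : ℝ)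
    (hlam : 0 < lam) (hm : m ∈ Set.Ioc (0 : ℝ) 1) (hσ : σ ≠ 0) (hd : d ≠ 0)
    (hsgn : σ*(b - 2*d) > 0)
    (R : ℝ → ℝ) (hR : ∀ c : ℝ, R c = Real.sqrt (8*a*c + σ^2*(b - 2*d)^2)) :
    Tendsto (fun c : ℝ =>
        (3*lam^2*m^2/(2*c)) * (4*a*c + b*σ^2*(b - 2*d) + (-1)*b*σ*R c))
      (nhdsWithin 0 {(0:ℝ)}ᶜ) (nhds (-12*a*d*lam^2*m^2/(b - 2*d))) ∧
    Tendsto (fun c : ℝ => 3*lam^2*m^2 * (σ*(b + 2*d) + (-1)*R c))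
      (nhdsWithin 0 {(0:ℝ)}ᶜ) (nhds (12*d*lam^2*m^2*σ)) ∧
    Tendsto (fun c : ℝ =>
        (-8*b^2*c*lam^2*m^2*σ^2 - 32*c*d^2*lam^2*m^2*σ^2 - 32*a*c^2*lam^2*m^2
          + 4*b^2*c*lam^2*σ^2 + 16*c*d^2*lam^2*σ^2 + 16*a*c^2*lam^2 - b^2*σ^2
          + 2*b*c*σ^2 + 2*b*d*σ^2 + 4*c*d*σ^2 - 4*a*c
          - (-1)*σ*(R c)*(8*b*c*lam^2*m^2 + 16*c*d*lam^2*m^2 - 4*b*c*lam^2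
            - 8*c*d*lam^2 + b - 2*c))
        / (2*c*(σ*(b + 2*d) + (-1)*R c)))
      (nhdsWithin 0 {(0:ℝ)}ᶜ)
      (nhds ((a + σ^2*(b - 2*d)*(1 - 4*d*lam^2*(2*m^2 - 1))) / (σ*(b - 2*d)))) ∧
    Tendsto (fun c : ℝ =>
        (-8*b^4*c*lam^2*m^2*σ^4 + 16*b^3*c*d*lam^2*m^2*σ^4
          - 64*a*b^2*c^2*lam^2*m^2*σ^2 - 32*a*b*c^2*d*lam^2*m^2*σ^2
          - 64*a*c^2*d^2*lam^2*m^2*σ^2 + 4*b^4*c*lam^2*σ^4 - 8*b^3*c*d*lam^2*σ^4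
          - 64*a^2*c^3*lam^2*m^2 + 32*a*b^2*c^2*lam^2*σ^2 + 16*a*b*c^2*d*lam^2*σ^2
          + 32*a*c^2*d^2*lam^2*σ^2 + b^4*σ^4 - 4*b^3*d*σ^4 + 4*b^2*d^2*σ^4
          + 32*a^2*c^3*lam^2 + 8*a*b^2*c*σ^2 - 8*a*b*c*d*σ^2 - 4*b^2*c^2*σ^2
          - 16*c^2*d^2*σ^2 + 8*a^2*c^2 - 16*a*c^3
          - (-1)*σ*(R c)*(8*b^3*c*lam^2*m^2*σ^2 + 32*a*b*c^2*lam^2*m^2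
            + 32*a*c^2*d*lam^2*m^2 - 4*b^3*c*lam^2*σ^2 - 16*a*b*c^2*lam^2
            - 16*a*c^2*d*lam^2 - b^3*σ^2 + 2*b^2*d*σ^2 - 4*a*b*c + 4*b*c^2
            + 8*c^2*d))
        / (4*c^2*(4*a*c + σ^2*(b^2 + 4*d^2) + (-1)*σ*(b + 2*d)*R c)))
      (nhdsWithin 0 {(0:ℝ)}ᶜ)
      (nhds ((a^2 - σ^2*(b - 2*d)*(b - 2*d*(1 + 2*a*lam^2*(2*m^2 - 1))))
        / (σ^2*(b - 2*d)^2))) :=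
  abcd_solution_4_1_2_limits_to_4_2_2_general a b d lam m σ hlam hm hd hsgn R hR
end
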